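/- arXiv:math/0009092 — 6 statements merged into one kernel-verified Lean document; each statement's English description precedes it below -/
import Mathlib

section
/- Let p be a prime with p ≡ 2 (mod 3), p not dividing a, and let r ≥ 3. Let N*(p^r) be the number of quadruples (x,y,z,t) in (Z/p^r Z)⁴ not all divisible by p such that a·x³ + a·y³ + p·z³ + p·t³ = 0 in Z/p^r Z. Then N*(p^r)/p^{3r} = 1 − 1/p². -/
open Finset

attribute [local instance] Classical.propDecidable

section helpers

variable {p : ℕ}

private lemma cube_coprime (hp : p.Prime) (h3 : p % 3 = 2) {s : ℕ} (hs : 0 < s) :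
    Nat.Coprime (Nat.card (ZMod (p ^ s))ˣ) 3 := by
  haveI : NeZero (p ^ s) := ⟨pow_ne_zero s hp.pos.ne'⟩
  rw [Nat.card_eq_fintype_card, ZMod.card_units_eq_totient, Nat.totient_prime_pow hp hs]
  have h2 := hp.two_le
  have h1 : ¬ 3 ∣ p := by omega
  have h1' : ¬ 3 ∣ (p - 1) := by omega
  have cp : Nat.Coprime p 3 :=
    Nat.coprime_comm.mp ((Nat.Prime.coprime_iff_not_dvd Nat.prime_three).mpr h1)
  have cp1 : Nat.Coprime (p - 1) 3 :=
    Nat.coprime_comm.mp ((Nat.Prime.coprime_iff_not_dvd Nat.prime_three).mpr h1')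
  exact Nat.coprime_mul_iff_left.mpr ⟨cp.pow_left _, cp1⟩

private lemma cube_inj (hp : p.Prime) (h3 : p % 3 = 2) {s : ℕ} (hs : 0 < s)
    {u v : ZMod (p ^ s)} (hu : IsUnit u) (hv : IsUnit v) (h : u ^ 3 = v ^ 3) : u = v := by
  haveI : NeZero (p ^ s) := ⟨pow_ne_zero s hp.pos.ne'⟩
  have hbij := (cube_coprime hp h3 hs).pow_left_bijective
  have heq : hu.unit ^ 3 = hv.unit ^ 3 := by
    ext
    simpa [hu.unit_spec, hv.unit_spec] using h
  have := hbij.injective heq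
  calc u = ↑hu.unit := hu.unit_spec.symm
    _ = ↑hv.unit := by rw [this]
    _ = v := hv.unit_spec

private lemma cube_surj (hp : p.Prime) (h3 : p % 3 = 2) {s : ℕ} (hs : 0 < s)
    {c : ZMod (p ^ s)} (hc : IsUnit c) : ∃ z, IsUnit z ∧ z ^ 3 = c := by
  haveI : NeZero (p ^ s) := ⟨pow_ne_zero s hp.pos.ne'⟩
  obtain ⟨u, hu⟩ := (cube_coprime hp h3 hs).pow_left_bijective.surjective hc.unit
  refine ⟨↑u, Units.isUnit u, ?_⟩
  have := congrArg Units.val hu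
  simpa [hc.unit_spec] using this

private lemma pdvd_iff_val (hp : p.Prime) {s : ℕ} (hs : 0 < s) (x : ZMod (p ^ s)) :
    (p : ZMod (p ^ s)) ∣ x ↔ p ∣ x.val := by
  haveI : NeZero (p ^ s) := ⟨pow_ne_zero s hp.pos.ne'⟩
  constructor
  · rintro ⟨u, rfl⟩
    rw [ZMod.val_mul]
    have h1 : p ∣ (p : ZMod (p ^ s)).val := by
      rw [ZMod.val_natCast]
      exact (Nat.dvd_mod_iff (dvd_pow_self p hs.ne')).mpr dvd_rfl
    exact (Nat.dvd_mod_iff (dvd_pow_self p hs.ne')).mpr (h1.mul_right _)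
  · intro h
    obtain ⟨k, hk⟩ := h
    refine ⟨(k : ZMod (p ^ s)), ?_⟩
    have h2 : ((x.val : ℕ) : ZMod (p ^ s)) = x := ZMod.natCast_zmod_val x
    rw [← h2, hk]
    push_cast
    ring

private lemma not_isUnit_iff_val (hp : p.Prime) {s : ℕ} (hs : 0 < s) (x : ZMod (p ^ s)) :
    ¬ IsUnit x ↔ p ∣ x.val := by
  haveI : NeZero (p ^ s) := ⟨pow_ne_zero s hp.pos.ne'⟩
  have h : IsUnit x ↔ Nat.Coprime x.val (p ^ s) := by
    conv_lhs => rw [← ZMod.natCast_zmod_val x]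
    exact ZMod.isUnit_iff_coprime _ _
  rw [h, Nat.coprime_pow_right_iff hs, Nat.coprime_comm,
    Nat.Prime.coprime_iff_not_dvd hp, not_not]

private lemma pdvd_iff_not_isUnit (hp : p.Prime) {s : ℕ} (hs : 0 < s) (x : ZMod (p ^ s)) :
    (p : ZMod (p ^ s)) ∣ x ↔ ¬ IsUnit x := by
  rw [pdvd_iff_val hp hs, not_isUnit_iff_val hp hs]

private lemma pmul_eq_zero_iff (hp : p.Prime) {s : ℕ} (hs : 0 < s) (x : ZMod (p ^ s)) :
    (p : ZMod (p ^ s)) * x = 0 ↔ p ^ (s - 1) ∣ x.val := by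
  haveI : NeZero (p ^ s) := ⟨pow_ne_zero s hp.pos.ne'⟩
  conv_lhs => rw [← ZMod.natCast_zmod_val x]
  rw [← Nat.cast_mul, ZMod.natCast_eq_zero_iff]
  have hb : p * p ^ (s - 1) = p ^ s := by
    rw [← pow_succ']
    congr 1
    omega
  have h2 := Nat.mul_dvd_mul_iff_left (a := p) (b := p ^ (s - 1)) (c := x.val) hp.pos
  rw [hb] at h2
  exact h2

private lemma castHom_eq {n m : ℕ} [NeZero n] (h : m ∣ n) (w : ZMod n) :
    ZMod.castHom h (ZMod m) w = (w.val : ZMod m) := by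
  rw [ZMod.castHom_apply, ZMod.natCast_val]

private lemma card_fiber {a b c : ℕ} [NeZero a] [NeZero b] (h : a ∣ b) (ha : 0 < a) (hc : 0 < c) (hb : a * c = b)
    (ζ : ZMod a) :
    (univ.filter fun z : ZMod b => ZMod.castHom h (ZMod a) z = ζ).card = c := by
  let π := ZMod.castHom h (ZMod a)
  have key : ∀ ξ : ZMod a, (univ.filter fun z : ZMod b => π z = ξ).card
      = (univ.filter fun z : ZMod b => π z = 0).card := by
    intro ξ
    apply Finset.card_bij' (i := fun z _ => z - ((ξ.val : ℕ) : ZMod b))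
      (j := fun z _ => z + ((ξ.val : ℕ) : ZMod b))
    · intro z hz
      simp only [mem_filter, mem_univ, true_and] at hz ⊢
      rw [map_sub, hz, map_natCast, ZMod.natCast_zmod_val, sub_self]
    · intro z hz
      simp only [mem_filter, mem_univ, true_and] at hz ⊢
      rw [map_add, hz, map_natCast, ZMod.natCast_zmod_val, zero_add]
    · intro z hz
      exact sub_add_cancel z _
    · intro z hz
      exact add_sub_cancel_right z _
  have total := Finset.card_eq_sum_card_fiberwise
      (f := π) (s := (univ : Finset (ZMod b))) (t := (univ : Finset (ZMod a)))
      (fun x _ => mem_univ _)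
  rw [Finset.card_univ, ZMod.card,
    Finset.sum_congr rfl (fun ξ _ => key ξ), Finset.sum_const, Finset.card_univ, ZMod.card,
    smul_eq_mul] at total
  exact (key ζ).trans (Nat.eq_of_mul_eq_mul_left ha (hb.trans total)).symm

private lemma card_nonunits [NeZero p] (hp : p.Prime) {s : ℕ} (hs : 0 < s) [NeZero (p ^ s)] :
    (univ.filter fun x : ZMod (p ^ s) => ¬ IsUnit x).card = p ^ (s - 1) := by
  have hdvd : p ∣ p ^ s := dvd_pow_self p hs.ne'
  have hb : p * p ^ (s - 1) = p ^ s := by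
    rw [← pow_succ']
    congr 1
    omega
  have hcf := card_fiber hdvd hp.pos (pow_pos hp.pos (s - 1)) hb (0 : ZMod p)
  rw [← hcf]
  congr 1
  apply Finset.filter_congr
  intro x _
  rw [not_isUnit_iff_val hp hs, castHom_eq, ZMod.natCast_eq_zero_iff]

private lemma card_units_filter [NeZero p] (hp : p.Prime) {s : ℕ} (hs : 0 < s) [NeZero (p ^ s)] :
    (univ.filter fun x : ZMod (p ^ s) => IsUnit x).card = p ^ s - p ^ (s - 1) := by
  have h1 := Finset.card_filter_add_card_filter_not
    (s := (univ : Finset (ZMod (p ^ s)))) (p := fun x => IsUnit x)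
  rw [card_nonunits hp hs, Finset.card_univ, ZMod.card] at h1
  omega

private lemma not_isUnit_p (hp : p.Prime) {s : ℕ} (hs : 0 < s) :
    ¬ IsUnit ((p : ℕ) : ZMod (p ^ s)) := by
  haveI : NeZero (p ^ s) := ⟨pow_ne_zero s hp.pos.ne'⟩
  rw [not_isUnit_iff_val hp hs, ZMod.val_natCast]
  exact (Nat.dvd_mod_iff (dvd_pow_self p hs.ne')).mpr dvd_rfl

private lemma not_isUnit_of_pdvd (hp : p.Prime) {s : ℕ} (hs : 0 < s) {x : ZMod (p ^ s)}
    (h : (p : ZMod (p ^ s)) ∣ x) : ¬ IsUnit x := (pdvd_iff_not_isUnit hp hs x).mp h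

/-- The inner count: for fixed non-unit `x, y` and unit `t`, the number of `z` solving the
equation is exactly `p`. -/
private lemma zcount (hp : p.Prime) (h3 : p % 3 = 2) {r : ℕ} (hr : 3 ≤ r) [NeZero (p ^ r)]
    {A : ZMod (p ^ r)} (hA : IsUnit A) {x y t : ZMod (p ^ r)}
    (hx : ¬ IsUnit x) (hy : ¬ IsUnit y) (ht : IsUnit t) :
    (univ.filter fun z : ZMod (p ^ r) =>
      A * x ^ 3 + A * y ^ 3 + (p : ZMod (p ^ r)) * z ^ 3 + (p : ZMod (p ^ r)) * t ^ 3 = 0).card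
      = p := by
  haveI : NeZero (p ^ (r - 1)) := ⟨pow_ne_zero _ hp.pos.ne'⟩
  have hr1 : 0 < r := by omega
  have hr2 : 0 < r - 1 := by omega
  set P : ZMod (p ^ r) := ((p : ℕ) : ZMod (p ^ r)) with hP
  obtain ⟨x₁, hx₁⟩ := (pdvd_iff_not_isUnit hp hr1 x).mpr hx
  obtain ⟨y₁, hy₁⟩ := (pdvd_iff_not_isUnit hp hr1 y).mpr hy
  set e : ZMod (p ^ r) := -(A * P ^ 2 * x₁ ^ 3 + A * P ^ 2 * y₁ ^ 3 + t ^ 3) with he_def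
  have he : IsUnit e := by
    by_contra hne
    have hd : P ∣ e := (pdvd_iff_not_isUnit hp hr1 e).mpr hne
    have hdt : P ∣ t ^ 3 := by
      have : t ^ 3 = -e - P * (P * (A * x₁ ^ 3 + A * y₁ ^ 3)) := by
        rw [he_def]; ring
      rw [this]
      exact dvd_sub (dvd_neg.mpr hd) ⟨P * (A * x₁ ^ 3 + A * y₁ ^ 3), rfl⟩
    exact not_isUnit_of_pdvd hp hr1 hdt (ht.pow 3)
  have hdvd : p ^ (r - 1) ∣ p ^ r := pow_dvd_pow p (by omega)
  set π := ZMod.castHom hdvd (ZMod (p ^ (r - 1))) with hπ_def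
  have hπe : IsUnit (π e) := he.map π
  obtain ⟨ζ, hζu, hζ3⟩ := cube_surj hp h3 hr2 hπe
  have hmul : p ^ (r - 1) * p = p ^ r := by
    rw [← pow_succ]
    congr 1
    omega
  have hiff : ∀ z : ZMod (p ^ r),
      (A * x ^ 3 + A * y ^ 3 + P * z ^ 3 + P * t ^ 3 = 0) ↔ π z = ζ := by
    intro z
    have h1 : A * x ^ 3 + A * y ^ 3 + P * z ^ 3 + P * t ^ 3 = P * (z ^ 3 - e) := by
      rw [hx₁, hy₁, he_def]; ring
    rw [h1]
    rw [pmul_eq_zero_iff hp hr1]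
    rw [← ZMod.natCast_eq_zero_iff, ← castHom_eq hdvd, ← hπ_def]
    rw [map_sub, sub_eq_zero, map_pow]
    constructor
    · intro hz
      have hzu : IsUnit (π z) := by
        have : IsUnit ((π z) ^ 3) := hz ▸ hπe
        exact (isUnit_pow_iff (by norm_num : (3:ℕ) ≠ 0)).mp this
      exact cube_inj hp h3 hr2 hzu hζu (by rw [hz, ← hζ3])
    · intro hz
      rw [hz, hζ3]
  calc (univ.filter fun z : ZMod (p ^ r) =>
      A * x ^ 3 + A * y ^ 3 + P * z ^ 3 + P * t ^ 3 = 0).card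
      = (univ.filter fun z : ZMod (p ^ r) => π z = ζ).card := by
        congr 1
        apply Finset.filter_congr
        intro z _
        simp only [hiff z]
    _ = p := card_fiber hdvd (pow_pos hp.pos _) hp.pos hmul ζ

/-- Counting triples componentwise. -/
private lemma card_filter_triple {α : Type*} [Fintype α] (P1 P2 P3 : α → Prop)
    [DecidablePred P1] [DecidablePred P2] [DecidablePred P3]
    [inst : DecidablePred (fun w : α × α × α => P1 w.1 ∧ P2 w.2.1 ∧ P3 w.2.2)] :
    (univ.filter fun w : α × α × α => P1 w.1 ∧ P2 w.2.1 ∧ P3 w.2.2).card =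
      (univ.filter P1).card * ((univ.filter P2).card * (univ.filter P3).card) := by
  have e : {w : α × α × α // P1 w.1 ∧ P2 w.2.1 ∧ P3 w.2.2}
      ≃ ({x // P1 x} × ({x // P2 x} × {x // P3 x})) :=
    { toFun := fun w => (⟨w.1.1, w.2.1⟩, ⟨w.1.2.1, w.2.2.1⟩, ⟨w.1.2.2, w.2.2.2⟩)
      invFun := fun x => ⟨(x.1.1, x.2.1.1, x.2.2.1), x.1.2, x.2.1.2, x.2.2.2⟩
      left_inv := fun ⟨⟨x, y, z⟩, h⟩ => rfl
      right_inv := fun ⟨a, b, c⟩ => rfl }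
  have h := Fintype.card_congr e
  rw [Fintype.card_prod, Fintype.card_prod, Fintype.card_subtype, Fintype.card_subtype,
    Fintype.card_subtype, Fintype.card_subtype] at h
  exact h

/-- Counting triples where only the first component is constrained. -/
private lemma card_filter_fst {α : Type*} [Fintype α] (Q : α → Prop)
    [DecidablePred Q] [inst : DecidablePred (fun w : α × α × α => Q w.1)] :
    (univ.filter fun w : α × α × α => Q w.1).card =
      (univ.filter Q).card * (Fintype.card α * Fintype.card α) := by
  have e : {w : α × α × α // Q w.1} ≃ ({x // Q x} × (α × α)) :=
    { toFun := fun w => (⟨w.1.1, w.2⟩, w.1.2.1, w.1.2.2)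
      invFun := fun x => ⟨(x.1.1, x.2.1, x.2.2), x.1.2⟩
      left_inv := fun ⟨⟨x, y, z⟩, h⟩ => rfl
      right_inv := fun ⟨a, b, c⟩ => rfl }
  have h := Fintype.card_congr e
  rw [Fintype.card_prod, Fintype.card_prod, Fintype.card_subtype, Fintype.card_subtype] at h
  exact h

/-- If the equation holds, then `x` is a unit iff `y` is a unit. -/
private lemma unit_xy (hp : p.Prime) {r : ℕ} (hr : 3 ≤ r) [NeZero (p ^ r)]
    {A : ZMod (p ^ r)} (hA : IsUnit A) {x y z t : ZMod (p ^ r)}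
    (he : A * x ^ 3 + A * y ^ 3 + (p : ZMod (p ^ r)) * z ^ 3 +
      (p : ZMod (p ^ r)) * t ^ 3 = 0) : (IsUnit x ↔ IsUnit y) := by
  have hr1 : 0 < r := by omega
  set P : ZMod (p ^ r) := ((p : ℕ) : ZMod (p ^ r)) with hP
  have key : ∀ u v : ZMod (p ^ r), A * u ^ 3 + A * v ^ 3 = P * (-(z ^ 3 + t ^ 3)) →
      IsUnit u → IsUnit v := by
    intro u v huv hu
    by_contra hv
    have hdv : P ∣ v := (pdvd_iff_not_isUnit hp hr1 v).mpr hv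
    have hdu : P ∣ A * u ^ 3 := by
      have : A * u ^ 3 = P * (-(z ^ 3 + t ^ 3)) - A * v ^ 3 := by
        rw [← huv]; ring
      rw [this]
      exact dvd_sub ⟨-(z ^ 3 + t ^ 3), rfl⟩ (Dvd.dvd.mul_left (hdv.pow (by norm_num)) A)
    exact not_isUnit_of_pdvd hp hr1 hdu (hA.mul (hu.pow 3))
  have hsum : A * x ^ 3 + A * y ^ 3 = P * (-(z ^ 3 + t ^ 3)) := by
    linear_combination he
  have hsum' : A * y ^ 3 + A * x ^ 3 = P * (-(z ^ 3 + t ^ 3)) := by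
    rw [← hsum]; ring
  exact ⟨key x y hsum, key y x hsum'⟩

/-- If the equation holds and `x, y` are non-units, then `z` is a unit iff `t` is. -/
private lemma unit_zt (hp : p.Prime) {r : ℕ} (hr : 3 ≤ r) [NeZero (p ^ r)]
    {A : ZMod (p ^ r)} (hA : IsUnit A) {x y z t : ZMod (p ^ r)}
    (he : A * x ^ 3 + A * y ^ 3 + (p : ZMod (p ^ r)) * z ^ 3 +
      (p : ZMod (p ^ r)) * t ^ 3 = 0)
    (hx : ¬ IsUnit x) (hy : ¬ IsUnit y) : (IsUnit z ↔ IsUnit t) := by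
  have hr1 : 0 < r := by omega
  obtain ⟨x₁, hx₁⟩ := (pdvd_iff_not_isUnit hp hr1 x).mpr hx
  obtain ⟨y₁, hy₁⟩ := (pdvd_iff_not_isUnit hp hr1 y).mpr hy
  have hPs : (p : ZMod (p ^ r)) *
      (A * (p : ZMod (p ^ r)) ^ 2 * x₁ ^ 3 + A * (p : ZMod (p ^ r)) ^ 2 * y₁ ^ 3
        + z ^ 3 + t ^ 3) = 0 := by
    rw [hx₁, hy₁] at he
    linear_combination he
  have hds : (p : ZMod (p ^ r)) ∣
      (A * (p : ZMod (p ^ r)) ^ 2 * x₁ ^ 3 + A * (p : ZMod (p ^ r)) ^ 2 * y₁ ^ 3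
        + z ^ 3 + t ^ 3) := by
    rw [pdvd_iff_val hp hr1]
    have h1 := (pmul_eq_zero_iff hp hr1 _).mp hPs
    exact dvd_trans (dvd_pow_self p (by omega : r - 1 ≠ 0)) h1
  have hdzt : (p : ZMod (p ^ r)) ∣ z ^ 3 + t ^ 3 := by
    obtain ⟨k, hk⟩ := hds
    refine ⟨k - (p : ZMod (p ^ r)) * (A * x₁ ^ 3 + A * y₁ ^ 3), ?_⟩
    rw [mul_sub, ← hk]
    ring
  have key : ∀ u v : ZMod (p ^ r), (p : ZMod (p ^ r)) ∣ u ^ 3 + v ^ 3 → IsUnit u → IsUnit v := by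
    intro u v huv hu
    by_contra hv
    have hdv : (p : ZMod (p ^ r)) ∣ v := (pdvd_iff_not_isUnit hp hr1 v).mpr hv
    have hdu : (p : ZMod (p ^ r)) ∣ u ^ 3 := by
      have h2 : u ^ 3 = (u ^ 3 + v ^ 3) - v ^ 3 := by ring
      rw [h2]
      exact dvd_sub huv (hdv.pow (by norm_num))
    exact not_isUnit_of_pdvd hp hr1 hdu (hu.pow 3)
  have hdzt' : (p : ZMod (p ^ r)) ∣ t ^ 3 + z ^ 3 := by rwa [add_comm]
  exact ⟨key z t hdzt, key t z hdzt'⟩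

private lemma main_count (hp : p.Prime) (h3 : p % 3 = 2) {r : ℕ} (hr : 3 ≤ r) [NeZero (p ^ r)]
    {A : ZMod (p ^ r)} (hA : IsUnit A) :
    (univ.filter fun v : ZMod (p ^ r) × ZMod (p ^ r) × ZMod (p ^ r) × ZMod (p ^ r) =>
      (¬ ((p : ZMod (p ^ r)) ∣ v.1 ∧ (p : ZMod (p ^ r)) ∣ v.2.1 ∧
          (p : ZMod (p ^ r)) ∣ v.2.2.1 ∧ (p : ZMod (p ^ r)) ∣ v.2.2.2) ∧
        A * v.1 ^ 3 + A * v.2.1 ^ 3 + (p : ZMod (p ^ r)) * v.2.2.1 ^ 3 +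
          (p : ZMod (p ^ r)) * v.2.2.2 ^ 3 = 0)).card
    = (p ^ r - p ^ (r - 1)) * (p ^ r * p ^ r)
        + p ^ (r - 1) * (p ^ (r - 1) * (p ^ r - p ^ (r - 1))) * p := by
  have hr1 : 0 < r := by omega
  haveI : NeZero p := ⟨hp.pos.ne'⟩
  set P : ZMod (p ^ r) := ((p : ℕ) : ZMod (p ^ r)) with hP
  set Eqn : ZMod (p ^ r) × ZMod (p ^ r) × ZMod (p ^ r) × ZMod (p ^ r) → Prop :=
    fun v => A * v.1 ^ 3 + A * v.2.1 ^ 3 + P * v.2.2.1 ^ 3 + P * v.2.2.2 ^ 3 = 0 with hEqn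
  set Prim : ZMod (p ^ r) × ZMod (p ^ r) × ZMod (p ^ r) × ZMod (p ^ r) → Prop :=
    fun v => ¬ (P ∣ v.1 ∧ P ∣ v.2.1 ∧ P ∣ v.2.2.1 ∧ P ∣ v.2.2.2) with hPrim
  -- split according to whether the first coordinate is a unit
  have hsplit := Finset.card_filter_add_card_filter_not
    (s := univ.filter fun v => Prim v ∧ Eqn v) (p := fun v => IsUnit v.1)
  rw [Finset.filter_filter, Finset.filter_filter] at hsplit
  -- Part A
  have hA1 : (univ.filter fun v : ZMod (p ^ r) × ZMod (p ^ r) × ZMod (p ^ r) × ZMod (p ^ r) =>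
      ((Prim v ∧ Eqn v) ∧ IsUnit v.1))
      = (univ.filter fun v => Eqn v ∧ IsUnit v.1) := by
    apply Finset.filter_congr
    intro v _
    constructor
    · rintro ⟨⟨_, he⟩, hu⟩; exact ⟨he, hu⟩
    · rintro ⟨he, hu⟩
      refine ⟨⟨?_, he⟩, hu⟩
      rintro ⟨hd, -⟩
      exact not_isUnit_of_pdvd hp hr1 hd hu
  -- existence and uniqueness of the cube root giving the first coordinate
  have hex : ∀ w : ZMod (p ^ r) × ZMod (p ^ r) × ZMod (p ^ r), IsUnit w.1 →
      ∃ x : ZMod (p ^ r), IsUnit x ∧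
        A * x ^ 3 + A * w.1 ^ 3 + P * w.2.1 ^ 3 + P * w.2.2 ^ 3 = 0 := by
    intro w hw
    set c : ZMod (p ^ r) := -(A * w.1 ^ 3 + P * w.2.1 ^ 3 + P * w.2.2 ^ 3) with hc_def
    have hc : IsUnit c := by
      by_contra hnc
      have hdc : P ∣ c := (pdvd_iff_not_isUnit hp hr1 c).mpr hnc
      have hdy : P ∣ A * w.1 ^ 3 := by
        have : A * w.1 ^ 3 = -c - P * (w.2.1 ^ 3 + w.2.2 ^ 3) := by rw [hc_def]; ring
        rw [this]
        exact dvd_sub (dvd_neg.mpr hdc) ⟨w.2.1 ^ 3 + w.2.2 ^ 3, rfl⟩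
      exact not_isUnit_of_pdvd hp hr1 hdy (hA.mul (hw.pow 3))
    have hu : IsUnit (↑hA.unit⁻¹ * c) := (Units.isUnit _).mul hc
    obtain ⟨x, hxu, hx3⟩ := cube_surj hp h3 hr1 hu
    refine ⟨x, hxu, ?_⟩
    have : A * x ^ 3 = c := by
      rw [hx3, ← mul_assoc, hA.mul_val_inv, one_mul]
    rw [this, hc_def]; ring
  have huniq : ∀ w : ZMod (p ^ r) × ZMod (p ^ r) × ZMod (p ^ r), ∀ x x' : ZMod (p ^ r),
      IsUnit x → IsUnit x' →
      A * x ^ 3 + A * w.1 ^ 3 + P * w.2.1 ^ 3 + P * w.2.2 ^ 3 = 0 →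
      A * x' ^ 3 + A * w.1 ^ 3 + P * w.2.1 ^ 3 + P * w.2.2 ^ 3 = 0 → x = x' := by
    intro w x x' hxu hxu' hx hx'
    have h1 : A * x ^ 3 = A * x' ^ 3 := by linear_combination hx - hx'
    exact cube_inj hp h3 hr1 hxu hxu' (hA.mul_left_cancel h1)
  have hA2 : (univ.filter fun v : ZMod (p ^ r) × ZMod (p ^ r) × ZMod (p ^ r) × ZMod (p ^ r) =>
      Eqn v ∧ IsUnit v.1).card
      = (univ.filter fun w : ZMod (p ^ r) × ZMod (p ^ r) × ZMod (p ^ r) => IsUnit w.1).card := by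
    set xsel : ZMod (p ^ r) × ZMod (p ^ r) × ZMod (p ^ r) → ZMod (p ^ r) :=
      fun w => if h : IsUnit w.1 then Classical.choose (hex w h) else 0 with hxsel
    have hxsel_spec : ∀ w : ZMod (p ^ r) × ZMod (p ^ r) × ZMod (p ^ r), IsUnit w.1 →
        IsUnit (xsel w) ∧
          A * (xsel w) ^ 3 + A * w.1 ^ 3 + P * w.2.1 ^ 3 + P * w.2.2 ^ 3 = 0 := by
      intro w hw
      rw [hxsel]
      simp only [dif_pos hw]
      exact Classical.choose_spec (hex w hw)
    refine Finset.card_bij' (fun v _ => v.2) (fun w _ => (xsel w, w)) ?_ ?_ ?_ ?_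
    · intro v hv
      simp only [mem_filter, mem_univ, true_and] at hv ⊢
      exact (unit_xy hp hr hA hv.1).mp hv.2
    · intro w hw
      simp only [mem_filter, mem_univ, true_and] at hw ⊢
      obtain ⟨hxu, hxe⟩ := hxsel_spec w hw
      exact ⟨hxe, hxu⟩
    · intro v hv
      simp only [mem_filter, mem_univ, true_and] at hv
      have hwu : IsUnit v.2.1 := (unit_xy hp hr hA hv.1).mp hv.2
      obtain ⟨hxu, hxe⟩ := hxsel_spec v.2 hwu
      have hsel : xsel v.2 = v.1 := huniq v.2 _ v.1 hxu hv.2 hxe hv.1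
      rw [Prod.ext_iff]
      exact ⟨hsel, rfl⟩
    · intro w hw
      rfl
  have hA3 : (univ.filter fun w : ZMod (p ^ r) × ZMod (p ^ r) × ZMod (p ^ r) =>
      IsUnit w.1).card = (p ^ r - p ^ (r - 1)) * (p ^ r * p ^ r) := by
    refine (card_filter_fst (fun x : ZMod (p ^ r) => IsUnit x)).trans ?_
    rw [card_units_filter hp hr1, ZMod.card]
  -- Part B
  have hB1 : (univ.filter fun v : ZMod (p ^ r) × ZMod (p ^ r) × ZMod (p ^ r) × ZMod (p ^ r) =>
      ((Prim v ∧ Eqn v) ∧ ¬ IsUnit v.1))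
      = (univ.filter fun v => Eqn v ∧ ¬ IsUnit v.1 ∧ IsUnit v.2.2.2) := by
    apply Finset.filter_congr
    intro v _
    constructor
    · rintro ⟨⟨hprim, he⟩, hx⟩
      refine ⟨he, hx, ?_⟩
      by_contra hnt
      have hy : ¬ IsUnit v.2.1 := fun h => hx ((unit_xy hp hr hA he).mpr h)
      have hz : ¬ IsUnit v.2.2.1 := fun h => hnt ((unit_zt hp hr hA he hx hy).mp h)
      exact hprim ⟨(pdvd_iff_not_isUnit hp hr1 _).mpr hx,
        (pdvd_iff_not_isUnit hp hr1 _).mpr hy,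
        (pdvd_iff_not_isUnit hp hr1 _).mpr hz,
        (pdvd_iff_not_isUnit hp hr1 _).mpr hnt⟩
    · rintro ⟨he, hx, ht⟩
      refine ⟨⟨?_, he⟩, hx⟩
      rintro ⟨-, -, -, hdt⟩
      exact not_isUnit_of_pdvd hp hr1 hdt ht
  have hB2 : (univ.filter fun v : ZMod (p ^ r) × ZMod (p ^ r) × ZMod (p ^ r) × ZMod (p ^ r) =>
      Eqn v ∧ ¬ IsUnit v.1 ∧ IsUnit v.2.2.2).card
      = (univ.filter fun w : ZMod (p ^ r) × ZMod (p ^ r) × ZMod (p ^ r) =>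
          ¬ IsUnit w.1 ∧ ¬ IsUnit w.2.1 ∧ IsUnit w.2.2).card * p := by
    have hmemb : ∀ v ∈ (univ.filter fun v : ZMod (p ^ r) × ZMod (p ^ r) × ZMod (p ^ r) × ZMod (p ^ r) =>
        Eqn v ∧ ¬ IsUnit v.1 ∧ IsUnit v.2.2.2),
        (v.1, v.2.1, v.2.2.2) ∈ (univ.filter fun w : ZMod (p ^ r) × ZMod (p ^ r) × ZMod (p ^ r) =>
          ¬ IsUnit w.1 ∧ ¬ IsUnit w.2.1 ∧ IsUnit w.2.2) := by
      intro v hv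
      simp only [mem_filter, mem_univ, true_and] at hv ⊢
      obtain ⟨he, hx, ht⟩ := hv
      exact ⟨hx, fun h => hx ((unit_xy hp hr hA he).mpr h), ht⟩
    have hfib : ∀ w ∈ (univ.filter fun w : ZMod (p ^ r) × ZMod (p ^ r) × ZMod (p ^ r) =>
        ¬ IsUnit w.1 ∧ ¬ IsUnit w.2.1 ∧ IsUnit w.2.2),
        ((univ.filter fun v : ZMod (p ^ r) × ZMod (p ^ r) × ZMod (p ^ r) × ZMod (p ^ r) =>
          Eqn v ∧ ¬ IsUnit v.1 ∧ IsUnit v.2.2.2).filter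
            fun v => (v.1, v.2.1, v.2.2.2) = w).card = p := by
      intro w hw
      simp only [mem_filter, mem_univ, true_and] at hw
      obtain ⟨hw1, hw2, hw3⟩ := hw
      refine Eq.trans ?_ (zcount hp h3 hr hA hw1 hw2 hw3)
      refine Finset.card_bij' (fun v _ => v.2.2.1) (fun z _ => (w.1, w.2.1, z, w.2.2)) ?_ ?_ ?_ ?_
      · intro v hv
        simp only [mem_filter, mem_univ, true_and] at hv ⊢
        obtain ⟨⟨he, hx, ht⟩, hgv⟩ := hv
        subst hgv
        exact he
      · intro z hz
        simp only [mem_filter, mem_univ, true_and] at hz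
        exact mem_filter.mpr ⟨mem_filter.mpr ⟨mem_univ _, hz, hw1, hw3⟩, rfl⟩
      · intro v hv
        simp only [mem_filter, mem_univ, true_and] at hv
        obtain ⟨-, hgv⟩ := hv
        subst hgv
        rfl
      · intro z hz
        rfl
    rw [Finset.card_eq_sum_card_fiberwise hmemb, Finset.sum_congr rfl hfib,
      Finset.sum_const, smul_eq_mul]
  have hB3 : (univ.filter fun w : ZMod (p ^ r) × ZMod (p ^ r) × ZMod (p ^ r) =>
      ¬ IsUnit w.1 ∧ ¬ IsUnit w.2.1 ∧ IsUnit w.2.2).card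
      = p ^ (r - 1) * (p ^ (r - 1) * (p ^ r - p ^ (r - 1))) := by
    refine (card_filter_triple (fun x : ZMod (p ^ r) => ¬ IsUnit x)
      (fun x : ZMod (p ^ r) => ¬ IsUnit x) (fun x : ZMod (p ^ r) => IsUnit x)).trans ?_
    rw [card_nonunits hp hr1, card_units_filter hp hr1]
  have hstart : (univ.filter fun v : ZMod (p ^ r) × ZMod (p ^ r) × ZMod (p ^ r) × ZMod (p ^ r) =>
      (¬ (P ∣ v.1 ∧ P ∣ v.2.1 ∧ P ∣ v.2.2.1 ∧ P ∣ v.2.2.2) ∧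
        A * v.1 ^ 3 + A * v.2.1 ^ 3 + P * v.2.2.1 ^ 3 + P * v.2.2.2 ^ 3 = 0))
      = (univ.filter fun v => Prim v ∧ Eqn v) :=
    Finset.filter_congr fun v _ => Iff.rfl
  rw [hstart, ← hsplit, hA1, hA2, hA3, hB1, hB2, hB3]

end helpers

theorem primitive_density_rkthree_two_mod_three (p : ℕ) (hp : p.Prime) (h3 : p % 3 = 2)
    (a : ℤ) (ha : ¬ (p : ℤ) ∣ a) (r : ℕ) (hr : 3 ≤ r) :
    (Nat.card {v : ZMod (p ^ r) × ZMod (p ^ r) × ZMod (p ^ r) × ZMod (p ^ r) //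
        ¬ ((p : ZMod (p ^ r)) ∣ v.1 ∧ (p : ZMod (p ^ r)) ∣ v.2.1 ∧
            (p : ZMod (p ^ r)) ∣ v.2.2.1 ∧ (p : ZMod (p ^ r)) ∣ v.2.2.2) ∧
          (a : ZMod (p ^ r)) * v.1 ^ 3 + (a : ZMod (p ^ r)) * v.2.1 ^ 3 +
            (p : ZMod (p ^ r)) * v.2.2.1 ^ 3 +
            (p : ZMod (p ^ r)) * v.2.2.2 ^ 3 = 0} : ℚ) / (p : ℚ) ^ (3 * r) =
      1 - 1 / (p : ℚ) ^ 2 := by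
  haveI : NeZero (p ^ r) := ⟨pow_ne_zero r hp.pos.ne'⟩
  have hA : IsUnit ((a : ℤ) : ZMod (p ^ r)) := by
    have hpZ : Prime (p : ℤ) := Nat.prime_iff_prime_int.mp hp
    have h1 : IsCoprime (a : ℤ) ((p : ℤ) ^ r) :=
      IsCoprime.pow_right ((hpZ.coprime_iff_not_dvd.mpr ha).symm)
    have h2 := h1.map (Int.castRingHom (ZMod (p ^ r)))
    have h0 : (Int.castRingHom (ZMod (p ^ r))) ((p : ℤ) ^ r) = 0 := by
      rw [map_pow]
      rw [show ((Int.castRingHom (ZMod (p ^ r))) (p : ℤ)) = ((p : ℕ) : ZMod (p ^ r)) by simp]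
      rw [← Nat.cast_pow, ZMod.natCast_self]
    rw [h0] at h2
    have h3' := isCoprime_zero_right.mp h2
    simpa using h3'
  have hN : Nat.card {v : ZMod (p ^ r) × ZMod (p ^ r) × ZMod (p ^ r) × ZMod (p ^ r) //
        ¬ ((p : ZMod (p ^ r)) ∣ v.1 ∧ (p : ZMod (p ^ r)) ∣ v.2.1 ∧
            (p : ZMod (p ^ r)) ∣ v.2.2.1 ∧ (p : ZMod (p ^ r)) ∣ v.2.2.2) ∧
          (a : ZMod (p ^ r)) * v.1 ^ 3 + (a : ZMod (p ^ r)) * v.2.1 ^ 3 +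
            (p : ZMod (p ^ r)) * v.2.2.1 ^ 3 +
            (p : ZMod (p ^ r)) * v.2.2.2 ^ 3 = 0}
      = (p ^ r - p ^ (r - 1)) * (p ^ r * p ^ r)
        + p ^ (r - 1) * (p ^ (r - 1) * (p ^ r - p ^ (r - 1))) * p := by
    rw [Nat.card_eq_fintype_card, Fintype.card_subtype]
    exact main_count hp h3 hr hA
  rw [hN]
  obtain ⟨q, rfl⟩ : ∃ q, r = q + 1 := ⟨r - 1, by omega⟩
  have hq : q + 1 - 1 = q := rfl
  rw [hq]
  have hp0 : (p : ℚ) ≠ 0 := Nat.cast_ne_zero.mpr hp.pos.ne'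
  have hle : p ^ q ≤ p ^ (q + 1) := Nat.pow_le_pow_right hp.pos (by omega)
  push_cast [Nat.cast_sub hle]
  field_simp
  ring
end

section
/- Let a be not divisible by 3 and let r ≥ 3. Let N*(3^r) be the number of quadruples (x,y,z,t) in (Z/3^r Z)⁴ not all divisible by 3 such that a·x³ + a·y³ + 3·z³ + 3·t³ = 0 in Z/3^r Z. Then N*(3^r)/3^{3r} = 4/3. -/
/-!
Split the primitive solutions according to whether `3 ∣ x`. Modulo 9, every cube is `0` or `±1`,
so a solution has `3 ∣ x ↔ 3 ∣ y` and `3 ∣ z + t`.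

The key fact is that in `ℤ/3^k` (`k ≥ 2`) every `c ≡ ±1 (mod 9)` has exactly three cube roots:
the cube roots of unity are the residues `≡ 1 (mod 3^(k-1))`, so cubing is 3-to-1 on units, and
its image, contained in the residues `≡ ±1 (mod 9)`, is as large as that set.

If `x` is a unit, then `y` is a unit, `3 ∣ z + t`, and the equation reads `x³ = c` with
`c ≡ -y³ ≡ ±1 (mod 9)`; this gives `3 · (2·3^(r-1)) · (3^r·3^(r-1))` solutions. If `3 ∣ x`, then
`3 ∣ y`, `z` is a unit, and after dividing by 3 the equation reads `t³ ≡ c (mod 3^(r-1))` with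
`c ≡ -z³ ≡ ±1 (mod 9)` (this needs `r ≥ 3`); each of its 3 roots lifts to 3 values of `t`, which
gives `3^(r-1) · 3^(r-1) · (2·3^(r-1)) · 9` solutions. Both counts equal `2·3^(3r-1)`.
-/

open Finset

namespace ZMod

variable {m n : ℕ}

theorem card_filter_castHom_eq_mul [NeZero n] (h : m ∣ n) (c : ZMod m) :
    #{x : ZMod n | castHom h (ZMod m) x = c} * m = n := by
  have : NeZero m := ⟨fun hm => NeZero.ne n (Nat.eq_zero_of_zero_dvd (hm ▸ h))⟩
  set f := castHom h (ZMod m)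
  have hfibre (c : ZMod m) : #{x | f x = c} = #{x | f x = 0} :=
    AddMonoidHom.card_fiber_eq_of_mem_range f (castHom_surjective h c) ⟨0, map_zero f⟩
  have hsum : ∑ c : ZMod m, #{x | f x = c} = n := by
    rw [← card_eq_sum_card_fiberwise (fun x _ => mem_univ (f x)), card_univ, card]
  rw [sum_congr rfl fun c _ => hfibre c, sum_const, card_univ, card, smul_eq_mul] at hsum
  rw [hfibre c, mul_comm, hsum]

theorem castHom_eq_zero_iff_dvd [NeZero n] (h : m ∣ n) (x : ZMod n) :
    castHom h (ZMod m) x = 0 ↔ (m : ZMod n) ∣ x := by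
  constructor
  · intro hx
    rw [← natCast_zmod_val x, map_natCast, natCast_eq_zero_iff] at hx
    rw [← natCast_zmod_val x]
    exact Nat.cast_dvd_cast hx
  · rintro ⟨y, rfl⟩
    rw [map_mul, map_natCast, natCast_self, zero_mul]

theorem isUnit_iff_castHom_ne_zero {p k : ℕ} [Fact p.Prime] (hk : k ≠ 0) (x : ZMod (p ^ k)) :
    IsUnit x ↔ castHom (dvd_pow_self p hk) (ZMod p) x ≠ 0 := by
  rw [← natCast_zmod_val x, isUnit_natCast_iff_not_dvd_pow Fact.out (Nat.pos_of_ne_zero hk),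
    map_natCast, Ne, natCast_eq_zero_iff]

theorem isUnit_iff_not_natCast_dvd {p k : ℕ} [Fact p.Prime] (hk : k ≠ 0) (x : ZMod (p ^ k)) :
    IsUnit x ↔ ¬(p : ZMod (p ^ k)) ∣ x := by
  rw [isUnit_iff_castHom_ne_zero hk, Ne, castHom_eq_zero_iff_dvd]

theorem natCast_mul_eq_zero_iff {p k : ℕ} [NeZero p] (x : ZMod (p ^ (k + 1))) :
    (p : ZMod (p ^ (k + 1))) * x = 0 ↔ castHom (pow_dvd_pow p k.le_succ) (ZMod (p ^ k)) x = 0 := by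
  rw [← natCast_zmod_val x, ← Nat.cast_mul, natCast_eq_zero_iff, map_natCast, natCast_eq_zero_iff]
  have := Nat.mul_dvd_mul_iff_left (NeZero.pos p) (b := p ^ k) (c := x.val)
  rwa [← pow_succ'] at this

theorem card_natCast_dvd_add {p k : ℕ} [NeZero p] (t : ZMod (p ^ (k + 1))) :
    #{z : ZMod (p ^ (k + 1)) | (p : ZMod (p ^ (k + 1))) ∣ z + t} = p ^ k := by
  have h := dvd_pow_self p k.succ_ne_zero
  refine Nat.eq_of_mul_eq_mul_right (NeZero.pos p) ?_
  rw [filter_congr fun z _ => by rw [← castHom_eq_zero_iff_dvd h, map_add, add_eq_zero_iff_eq_neg],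
    card_filter_castHom_eq_mul, pow_succ]

theorem card_isUnit {p k : ℕ} [Fact p.Prime] :
    #{x : ZMod (p ^ (k + 1)) | IsUnit x} = p ^ k * (p - 1) := by
  have hnot : #{x : ZMod (p ^ (k + 1)) | ¬IsUnit x} = p ^ k := by
    simpa [isUnit_iff_not_natCast_dvd k.succ_ne_zero] using card_natCast_dvd_add (p := p) (k := k) 0
  have h := card_filter_add_card_filter_not (s := univ) fun x : ZMod (p ^ (k + 1)) => IsUnit x
  rw [hnot, card_univ, card] at h
  have := pow_succ p k
  rw [Nat.mul_sub_one]
  omega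

end ZMod

theorem card_pow_eq_pow_of_isUnit {M : Type*} [CommMonoid M] [Fintype M] [DecidableEq M] (m : ℕ)
    {x₀ : M} (hx₀ : IsUnit x₀) : #{x : M | x ^ m = x₀ ^ m} = #{x : M | x ^ m = 1} := by
  obtain ⟨u, rfl⟩ := hx₀
  refine card_equiv (Units.mulLeft u⁻¹) fun x => ?_
  simp only [mem_filter, mem_univ, true_and]
  show x ^ m = u ^ m ↔ (↑u⁻¹ * x) ^ m = 1
  rw [mul_pow, ← Units.val_pow_eq_pow_val u⁻¹, inv_pow, Units.inv_mul_eq_one,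
    Units.val_pow_eq_pow_val, eq_comm]

namespace Finset

variable {α β : Type*} [Fintype α] [Fintype β]

theorem card_filter_prod_eq_sum_fst (p : α → β → Prop) [∀ a b, Decidable (p a b)] :
    #{v : α × β | p v.1 v.2} = ∑ a, #{b | p a b} := by
  simp only [card_filter, Fintype.sum_prod_type]

theorem card_filter_prod_eq_sum_snd (p : α → β → Prop) [∀ a b, Decidable (p a b)] :
    #{v : α × β | p v.1 v.2} = ∑ b, #{a | p a b} := by
  simp only [card_filter, Fintype.sum_prod_type]
  exact sum_comm

theorem card_filter_prod_eq_mul_of_card_fiber (p : α → Prop) (q : α → β → Prop) [DecidablePred p]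
    [∀ a b, Decidable (q a b)] {m : ℕ} (hq : ∀ a, p a → #{b | q a b} = m) :
    #{v : α × β | p v.1 ∧ q v.1 v.2} = #{a | p a} * m := by
  rw [card_filter_prod_eq_sum_fst (fun a b => p a ∧ q a b), ← smul_eq_mul, ← sum_const,
    sum_filter]
  refine sum_congr rfl fun a _ => ?_
  by_cases ha : p a
  · simp only [ha, true_and, if_true, hq a ha]
  · simp [ha]

end Finset

namespace DiagonalCubic

open ZMod

theorem sum_cubes_mod_nine_eq_zero {n : ℕ} (h : 9 ∣ n) (x y : ZMod n)
    (hxy : castHom h (ZMod 9) (3 * (x ^ 3 + y ^ 3)) = 0) :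
    castHom h (ZMod 9) (x ^ 3 + y ^ 3) = 0 := by
  simp only [map_mul, map_add, map_pow, map_ofNat] at *
  generalize castHom h (ZMod 9) x = X at *
  generalize castHom h (ZMod 9) y = Y at *
  revert X Y
  decide

section ModNine

variable {n : ℕ} [NeZero n]

theorem three_dvd_iff_mod_nine (h : 9 ∣ n) (x : ZMod n) :
    3 ∣ x ↔ castHom (by norm_num : 3 ∣ 9) (ZMod 3) (castHom h (ZMod 9) x) = 0 := by
  rw [← RingHom.comp_apply, castHom_comp, castHom_eq_zero_iff_dvd, Nat.cast_ofNat]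

theorem cube_mod_nine_eq_zero_iff (h : 9 ∣ n) (x : ZMod n) :
    castHom h (ZMod 9) (x ^ 3) = 0 ↔ 3 ∣ x := by
  rw [three_dvd_iff_mod_nine h, map_pow]
  generalize castHom h (ZMod 9) x = X
  revert X
  decide

theorem cube_mod_nine_of_not_dvd (h : 9 ∣ n) {x : ZMod n} (hx : ¬3 ∣ x) :
    castHom h (ZMod 9) (x ^ 3) = 1 ∨ castHom h (ZMod 9) (x ^ 3) = -1 := by
  rw [three_dvd_iff_mod_nine h, map_pow] at *
  generalize castHom h (ZMod 9) x = X at *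
  revert X
  decide

theorem three_mul_sum_cubes_mod_nine_eq_zero_iff (h : 9 ∣ n) (x y : ZMod n) :
    castHom h (ZMod 9) (3 * (x ^ 3 + y ^ 3)) = 0 ↔ 3 ∣ x + y := by
  rw [three_dvd_iff_mod_nine h]
  simp only [map_mul, map_add, map_pow, map_ofNat]
  generalize castHom h (ZMod 9) x = X
  generalize castHom h (ZMod 9) y = Y
  revert X Y
  decide

theorem solution_mod_nine (h : 9 ∣ n) {A x y z t : ZMod n} (hA : IsUnit A)
    (hsol : A * x ^ 3 + A * y ^ 3 + 3 * z ^ 3 + 3 * t ^ 3 = 0) : (3 ∣ x ↔ 3 ∣ y) ∧ 3 ∣ z + t := by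
  set ρ := castHom h (ZMod 9)
  have hsol9 : ρ A * ρ (x ^ 3 + y ^ 3) + ρ (3 * (z ^ 3 + t ^ 3)) = 0 := by
    rw [← map_mul, ← map_add, ← map_zero ρ, ← hsol]
    ring_nf
  -- multiplying by 3 kills `3 (z³ + t³)` modulo 9
  have hxy : ρ (x ^ 3 + y ^ 3) = 0 := by
    refine sum_cubes_mod_nine_eq_zero h x y ((hA.map ρ).mul_right_eq_zero.mp ?_)
    have h9 : (9 : ZMod 9) = 0 := rfl
    simp only [ρ, map_mul, map_add, map_pow, map_ofNat] at hsol9 ⊢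
    linear_combination 3 * hsol9 - (ρ z ^ 3 + ρ t ^ 3) * h9
  rw [hxy, mul_zero, zero_add, three_mul_sum_cubes_mod_nine_eq_zero_iff h] at hsol9
  rw [map_add, add_eq_zero_iff_eq_neg] at hxy
  rw [← cube_mod_nine_eq_zero_iff h, ← cube_mod_nine_eq_zero_iff h, hxy, neg_eq_zero]
  exact ⟨Iff.rfl, hsol9⟩

theorem primitive_solution_iff_of_three_dvd (h : 9 ∣ n) {A x y z t : ZMod n} (hA : IsUnit A)
    (hx : 3 ∣ x) :
    (¬(3 ∣ x ∧ 3 ∣ y ∧ 3 ∣ z ∧ 3 ∣ t) ∧ A * x ^ 3 + A * y ^ 3 + 3 * z ^ 3 + 3 * t ^ 3 = 0) ↔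
      3 ∣ y ∧ ¬3 ∣ z ∧ A * x ^ 3 + A * y ^ 3 + 3 * z ^ 3 + 3 * t ^ 3 = 0 := by
  constructor
  · rintro ⟨hprim, hsol⟩
    obtain ⟨hxy, hzt⟩ := solution_mod_nine h hA hsol
    exact ⟨hxy.mp hx, fun hz => hprim ⟨hx, hxy.mp hx, hz, (dvd_add_right hz).mp hzt⟩, hsol⟩
  · rintro ⟨-, hz, hsol⟩
    exact ⟨fun hall => hz hall.2.2.1, hsol⟩

end ModNine

theorem isUnit_iff_not_three_dvd {k : ℕ} (hk : k ≠ 0) (x : ZMod (3 ^ k)) :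
    IsUnit x ↔ ¬3 ∣ x := by
  exact_mod_cast isUnit_iff_not_natCast_dvd hk x

theorem two_le_of_nine_dvd {k : ℕ} (h : 9 ∣ 3 ^ k) : 2 ≤ k :=
  (Nat.pow_dvd_pow_iff_le_right (by norm_num : 1 < 3)).mp (h : 3 ^ 2 ∣ 3 ^ k)

theorem pow_three_eq_one_iff {k : ℕ} (hk : k ≠ 0) (x : ZMod (3 ^ (k + 1))) :
    x ^ 3 = 1 ↔ castHom (pow_dvd_pow 3 k.le_succ) (ZMod (3 ^ k)) x = 1 := by
  set π := castHom (pow_dvd_pow 3 k.le_succ) (ZMod (3 ^ k))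
  have h3 := dvd_pow_self 3 k.succ_ne_zero
  have hdvd (w : ZMod (3 ^ (k + 1))) : 3 ∣ w ↔ castHom h3 (ZMod 3) w = 0 := by
    exact_mod_cast (castHom_eq_zero_iff_dvd h3 w).symm
  have hmul (w : ZMod (3 ^ (k + 1))) : 3 * w = 0 ↔ π w = 0 := by
    exact_mod_cast natCast_mul_eq_zero_iff w
  suffices key : 3 ∣ x - 1 → (x ^ 3 = 1 ↔ π x = 1) by
    constructor
    · intro hx
      refine (key ?_).mp hx
      have hfermat := ZMod.pow_card (castHom h3 (ZMod 3) x)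
      rw [← map_pow, hx, map_one] at hfermat
      rw [hdvd, map_sub, ← hfermat, map_one, sub_self]
    · intro hx
      refine (key ?_).mpr hx
      rw [← sub_eq_zero, ← map_one π, ← map_sub, castHom_eq_zero_iff_dvd, Nat.cast_pow] at hx
      exact (dvd_pow_self _ hk).trans (by exact_mod_cast hx)
  rintro ⟨u, hu⟩
  have hunit : IsUnit (1 + 3 * u + 3 * u ^ 2) := by
    rw [isUnit_iff_castHom_ne_zero k.succ_ne_zero]
    simp only [map_add, map_mul, map_pow, map_one, map_ofNat]
    generalize castHom _ (ZMod 3) u = U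
    revert U
    decide
  have hcube : x ^ 3 - 1 = 3 * (x - 1) * (1 + 3 * u + 3 * u ^ 2) := by
    rw [eq_add_of_sub_eq hu]
    ring
  rw [← sub_eq_zero, hcube, hunit.mul_left_eq_zero, hmul, map_sub, map_one, sub_eq_zero]

theorem card_pow_three_eq_one {k : ℕ} (h : 9 ∣ 3 ^ k) : #{x : ZMod (3 ^ k) | x ^ 3 = 1} = 3 := by
  have hk := two_le_of_nine_dvd h
  obtain ⟨j, rfl⟩ : ∃ j, k = j + 1 := ⟨k - 1, by omega⟩
  refine Nat.eq_of_mul_eq_mul_right (pow_pos three_pos j) ?_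
  rw [filter_congr fun x _ => pow_three_eq_one_iff (by omega) x, card_filter_castHom_eq_mul,
    pow_succ']

theorem exists_isUnit_pow_three_eq {k : ℕ} (h : 9 ∣ 3 ^ k) {c : ZMod (3 ^ k)}
    (hc : castHom h (ZMod 9) c = 1 ∨ castHom h (ZMod 9) c = -1) : ∃ x, IsUnit x ∧ x ^ 3 = c := by
  obtain ⟨j, rfl⟩ : ∃ j, k = j + 1 := ⟨k - 1, by have := two_le_of_nine_dvd h; omega⟩
  set ρ := castHom h (ZMod 9)
  set U : Finset (ZMod (3 ^ (j + 1))) := {x | IsUnit x}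
  set C : Finset (ZMod (3 ^ (j + 1))) := ({c | ρ c = 1} : Finset _) ∪ ({c | ρ c = -1} : Finset _)
  have hsub : U.image (· ^ 3) ⊆ C := by
    simp only [U, C, subset_iff, mem_image, mem_union, mem_filter, mem_univ, true_and]
    rintro _ ⟨x, hx, rfl⟩
    exact cube_mod_nine_of_not_dvd h ((isUnit_iff_not_three_dvd j.succ_ne_zero x).mp hx)
  have hfibre : #U = #(U.image (· ^ 3)) * 3 := by
    rw [card_eq_sum_card_image (· ^ 3) U]
    refine sum_const_nat fun c hc => ?_
    obtain ⟨x₀, hx₀, rfl⟩ := mem_image.mp hc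
    have hx₀ : IsUnit x₀ := (mem_filter.mp hx₀).2
    rw [filter_filter, filter_congr fun x _ => and_iff_right_of_imp fun hx =>
      (isUnit_pow_iff three_ne_zero).mp (hx ▸ hx₀.pow 3), card_pow_eq_pow_of_isUnit 3 hx₀,
      card_pow_three_eq_one h]
  have hC : #C * 9 = 2 * 3 ^ (j + 1) := by
    rw [card_union_of_disjoint (disjoint_filter.mpr fun _ _ h1 h2 =>
        (by decide : (1 : ZMod 9) ≠ -1) (h1.symm.trans h2)),
      add_mul, card_filter_castHom_eq_mul, card_filter_castHom_eq_mul]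
    ring
  have hU : #U = 3 ^ j * 2 := card_isUnit
  have hsucc := pow_succ 3 j
  have hcard : #C ≤ #(U.image (· ^ 3)) := by omega
  have hcC : c ∈ C := by simpa [C] using hc
  rw [← eq_of_subset_of_card_le hsub hcard] at hcC
  obtain ⟨x, hx, rfl⟩ := mem_image.mp hcC
  exact ⟨x, (mem_filter.mp hx).2, rfl⟩

theorem card_pow_three_eq {k : ℕ} (h : 9 ∣ 3 ^ k) {c : ZMod (3 ^ k)}
    (hc : castHom h (ZMod 9) c = 1 ∨ castHom h (ZMod 9) c = -1) : #{x | x ^ 3 = c} = 3 := by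
  obtain ⟨x₀, hx₀, rfl⟩ := exists_isUnit_pow_three_eq h hc
  rw [card_pow_eq_pow_of_isUnit 3 hx₀, card_pow_three_eq_one h]

theorem card_isUnit_solutions {k : ℕ} (h : 9 ∣ 3 ^ k) {A : ZMod (3 ^ k)} (hA : IsUnit A)
    (y z t : ZMod (3 ^ k)) :
    #{x | IsUnit x ∧ A * x ^ 3 + A * y ^ 3 + 3 * z ^ 3 + 3 * t ^ 3 = 0} =
      if IsUnit y ∧ 3 ∣ z + t then 3 else 0 := by
  have hk : k ≠ 0 := by have := two_le_of_nine_dvd h; omega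
  set ρ := castHom h (ZMod 9)
  obtain ⟨B, hB⟩ := hA.exists_right_inv
  set c := -(y ^ 3 + B * (3 * (z ^ 3 + t ^ 3))) with hc
  have hsol (x : ZMod (3 ^ k)) : A * x ^ 3 + A * y ^ 3 + 3 * z ^ 3 + 3 * t ^ 3 = 0 ↔ x ^ 3 = c := by
    have hfactor : A * x ^ 3 + A * y ^ 3 + 3 * z ^ 3 + 3 * t ^ 3 = A * (x ^ 3 - c) := by
      rw [hc]
      linear_combination (-3 * (z ^ 3 + t ^ 3)) * hB
    rw [hfactor, hA.mul_right_eq_zero, sub_eq_zero]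
  split_ifs with hcond
  · obtain ⟨hy, hzt⟩ := hcond
    have hc9 : ρ c = 1 ∨ ρ c = -1 := by
      have hcy : ρ c = -ρ (y ^ 3) := by
        rw [hc, map_neg, map_add, map_mul, (three_mul_sum_cubes_mod_nine_eq_zero_iff h z t).mpr hzt,
          mul_zero, add_zero]
      simp only [hcy, neg_eq_iff_eq_neg, neg_neg]
      exact (cube_mod_nine_of_not_dvd h ((isUnit_iff_not_three_dvd hk y).mp hy)).symm
    have hunit (x : ZMod (3 ^ k)) (hx : x ^ 3 = c) : IsUnit x := by
      rw [isUnit_iff_not_three_dvd hk, ← cube_mod_nine_eq_zero_iff h, hx]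
      rcases hc9 with hc9 | hc9 <;> rw [hc9] <;> decide
    rw [filter_congr fun x _ =>
      ⟨fun hx => (hsol x).mp hx.2, fun hx => ⟨hunit x hx, (hsol x).mpr hx⟩⟩]
    exact card_pow_three_eq h hc9
  · rw [card_eq_zero, filter_eq_empty_iff]
    rintro x - ⟨hx, hxsol⟩
    obtain ⟨hxy, hzt⟩ := solution_mod_nine h hA hxsol
    rw [isUnit_iff_not_three_dvd hk, hxy, ← isUnit_iff_not_three_dvd hk] at hx
    exact hcond ⟨hx, hzt⟩

theorem card_solutions_of_three_dvd {k : ℕ} (h : 9 ∣ 3 ^ k) (A : ZMod (3 ^ (k + 1)))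
    {x y z : ZMod (3 ^ (k + 1))} (hx : 3 ∣ x) (hy : 3 ∣ y) (hz : IsUnit z) :
    #{t | A * x ^ 3 + A * y ^ 3 + 3 * z ^ 3 + 3 * t ^ 3 = 0} = 9 := by
  obtain ⟨x, rfl⟩ := hx
  obtain ⟨y, rfl⟩ := hy
  have h' : 9 ∣ 3 ^ (k + 1) := h.trans (pow_dvd_pow 3 k.le_succ)
  set π := castHom (pow_dvd_pow 3 k.le_succ) (ZMod (3 ^ k))
  set c := -π (z ^ 3 + 9 * A * (x ^ 3 + y ^ 3)) with hc
  have hsol (t : ZMod (3 ^ (k + 1))) :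
      A * (3 * x) ^ 3 + A * (3 * y) ^ 3 + 3 * z ^ 3 + 3 * t ^ 3 = 0 ↔ π t ^ 3 = c := by
    have hmul (w : ZMod (3 ^ (k + 1))) : 3 * w = 0 ↔ π w = 0 := by
      exact_mod_cast natCast_mul_eq_zero_iff w
    rw [show A * (3 * x) ^ 3 + A * (3 * y) ^ 3 + 3 * z ^ 3 + 3 * t ^ 3 =
        3 * (t ^ 3 + (z ^ 3 + 9 * A * (x ^ 3 + y ^ 3))) by ring,
      hmul, map_add, map_pow, hc, add_eq_zero_iff_eq_neg]
  have hc9 : castHom h (ZMod 9) c = 1 ∨ castHom h (ZMod 9) c = -1 := by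
    have hcz : castHom h (ZMod 9) c = -castHom h' (ZMod 9) (z ^ 3) := by
      have h9 : (9 : ZMod 9) = 0 := rfl
      rw [hc, map_neg, ← RingHom.comp_apply, castHom_comp]
      simp only [map_add, map_mul, map_ofNat, h9, zero_mul, add_zero]
    simp only [hcz, neg_eq_iff_eq_neg, neg_neg]
    exact (cube_mod_nine_of_not_dvd h' ((isUnit_iff_not_three_dvd k.succ_ne_zero z).mp hz)).symm
  rw [filter_congr fun t _ => hsol t,
    card_eq_sum_card_fiberwise (f := π) (t := {s | s ^ 3 = c}) fun t ht => by simpa using ht,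
    sum_const_nat (m := 3) fun s hs => ?_, card_pow_three_eq h hc9]
  rw [filter_filter, filter_congr fun t _ => and_iff_right_of_imp fun hts => by
    rw [hts]; exact (mem_filter.mp hs).2]
  refine Nat.eq_of_mul_eq_mul_right (pow_pos three_pos k) ?_
  rw [card_filter_castHom_eq_mul, pow_succ']

theorem card_solutions_isUnit_fst {k : ℕ} (h : 9 ∣ 3 ^ (k + 1)) {A : ZMod (3 ^ (k + 1))}
    (hA : IsUnit A) :
    #{v : ZMod (3 ^ (k + 1)) × ZMod (3 ^ (k + 1)) × ZMod (3 ^ (k + 1)) × ZMod (3 ^ (k + 1)) |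
      IsUnit v.1 ∧ A * v.1 ^ 3 + A * v.2.1 ^ 3 + 3 * v.2.2.1 ^ 3 + 3 * v.2.2.2 ^ 3 = 0} =
      2 * 3 ^ (3 * k + 2) := by
  have hdvd (t : ZMod (3 ^ (k + 1))) : #{z | 3 ∣ z + t} = 3 ^ k := by
    exact_mod_cast card_natCast_dvd_add t
  rw [card_filter_prod_eq_sum_snd (fun x (w : _ × _ × _) =>
      IsUnit x ∧ A * x ^ 3 + A * w.1 ^ 3 + 3 * w.2.1 ^ 3 + 3 * w.2.2 ^ 3 = 0)]
  simp only [card_isUnit_solutions h hA]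
  rw [← sum_filter, sum_const, smul_eq_mul,
    card_filter_prod_eq_mul_of_card_fiber (fun y => IsUnit y)
      (fun _ (w : _ × _) => (3 : ZMod (3 ^ (k + 1))) ∣ w.1 + w.2) fun _ _ => rfl,
    card_filter_prod_eq_sum_snd (fun z t => (3 : ZMod (3 ^ (k + 1))) ∣ z + t)]
  simp only [hdvd, sum_const, card_univ, ZMod.card, smul_eq_mul, card_isUnit]
  ring

theorem card_primitive_solutions_not_isUnit_fst {k : ℕ} (h : 9 ∣ 3 ^ k) {A : ZMod (3 ^ (k + 1))}
    (hA : IsUnit A) :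
    #{v : ZMod (3 ^ (k + 1)) × ZMod (3 ^ (k + 1)) × ZMod (3 ^ (k + 1)) × ZMod (3 ^ (k + 1)) |
      ¬IsUnit v.1 ∧ ¬(3 ∣ v.1 ∧ 3 ∣ v.2.1 ∧ 3 ∣ v.2.2.1 ∧ 3 ∣ v.2.2.2) ∧
      A * v.1 ^ 3 + A * v.2.1 ^ 3 + 3 * v.2.2.1 ^ 3 + 3 * v.2.2.2 ^ 3 = 0} =
      2 * 3 ^ (3 * k + 2) := by
  have hunit := isUnit_iff_not_three_dvd k.succ_ne_zero
  have hdvd : #{x : ZMod (3 ^ (k + 1)) | 3 ∣ x} = 3 ^ k := by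
    simpa using card_natCast_dvd_add (p := 3) (k := k) 0
  have hndvd : #{x : ZMod (3 ^ (k + 1)) | ¬3 ∣ x} = 2 * 3 ^ k := by
    simpa [hunit, mul_comm] using card_isUnit (p := 3) (k := k)
  have hfibre_y (x y : ZMod (3 ^ (k + 1))) (hx : 3 ∣ x) (hy : 3 ∣ y) :
      #{w : ZMod (3 ^ (k + 1)) × ZMod (3 ^ (k + 1)) |
        ¬3 ∣ w.1 ∧ A * x ^ 3 + A * y ^ 3 + 3 * w.1 ^ 3 + 3 * w.2 ^ 3 = 0} = 2 * 3 ^ k * 9 := by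
    rw [card_filter_prod_eq_mul_of_card_fiber _ _
      fun z hz => card_solutions_of_three_dvd h A hx hy ((hunit z).mpr hz), hndvd]
  have hfibre_x (x : ZMod (3 ^ (k + 1))) (hx : 3 ∣ x) :
      #{w : ZMod (3 ^ (k + 1)) × ZMod (3 ^ (k + 1)) × ZMod (3 ^ (k + 1)) |
        3 ∣ w.1 ∧ ¬3 ∣ w.2.1 ∧ A * x ^ 3 + A * w.1 ^ 3 + 3 * w.2.1 ^ 3 + 3 * w.2.2 ^ 3 = 0} =
        3 ^ k * (2 * 3 ^ k * 9) := by
    rw [card_filter_prod_eq_mul_of_card_fiber _ _ (hfibre_y x · hx ·), hdvd]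
  have hnotunit (x : ZMod (3 ^ (k + 1))) : ¬IsUnit x ↔ 3 ∣ x := by
    rw [hunit, not_not]
  rw [filter_congr fun v _ => (and_congr (hnotunit v.1) Iff.rfl).trans
      (and_congr_right fun hx =>
        primitive_solution_iff_of_three_dvd (h.trans (pow_dvd_pow 3 k.le_succ)) hA hx),
    card_filter_prod_eq_mul_of_card_fiber _ _ hfibre_x, hdvd]
  ring

theorem card_primitive_solutions {k : ℕ} (h : 9 ∣ 3 ^ k) {A : ZMod (3 ^ (k + 1))}
    (hA : IsUnit A) :
    #{v : ZMod (3 ^ (k + 1)) × ZMod (3 ^ (k + 1)) × ZMod (3 ^ (k + 1)) × ZMod (3 ^ (k + 1)) |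
      ¬(3 ∣ v.1 ∧ 3 ∣ v.2.1 ∧ 3 ∣ v.2.2.1 ∧ 3 ∣ v.2.2.2) ∧
      A * v.1 ^ 3 + A * v.2.1 ^ 3 + 3 * v.2.2.1 ^ 3 + 3 * v.2.2.2 ^ 3 = 0} =
      4 * 3 ^ (3 * k + 2) := by
  rw [← card_filter_add_card_filter_not (fun v => IsUnit v.1), filter_filter, filter_filter]
  simp only [and_comm (b := IsUnit _), and_comm (b := ¬IsUnit _)]
  rw [filter_congr fun v _ => and_congr_right fun hx => and_iff_right_of_imp fun _ =>
      not_and_of_not_left _ ((isUnit_iff_not_three_dvd k.succ_ne_zero v.1).mp hx),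
    card_solutions_isUnit_fst (h.trans (pow_dvd_pow 3 k.le_succ)) hA,
    card_primitive_solutions_not_isUnit_fst h hA]
  ring

end DiagonalCubic

theorem primitive_density_rkthree_three (a : ℤ) (ha : ¬ (3 : ℤ) ∣ a) (r : ℕ) (hr : 3 ≤ r) :
    (Nat.card {v : ZMod (3 ^ r) × ZMod (3 ^ r) × ZMod (3 ^ r) × ZMod (3 ^ r) //
        ¬ ((3 : ZMod (3 ^ r)) ∣ v.1 ∧ (3 : ZMod (3 ^ r)) ∣ v.2.1 ∧
            (3 : ZMod (3 ^ r)) ∣ v.2.2.1 ∧ (3 : ZMod (3 ^ r)) ∣ v.2.2.2) ∧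
          (a : ZMod (3 ^ r)) * v.1 ^ 3 + (a : ZMod (3 ^ r)) * v.2.1 ^ 3 +
            (3 : ZMod (3 ^ r)) * v.2.2.1 ^ 3 +
            (3 : ZMod (3 ^ r)) * v.2.2.2 ^ 3 = 0} : ℚ) / (3 : ℚ) ^ (3 * r) =
      4 / 3 := by
  obtain ⟨k, rfl⟩ : ∃ k, r = k + 1 := ⟨r - 1, by omega⟩
  have hA : IsUnit (a : ZMod (3 ^ (k + 1))) := by
    rw [ZMod.isUnit_iff_castHom_ne_zero k.succ_ne_zero, map_intCast, Ne,
      ZMod.intCast_zmod_eq_zero_iff_dvd]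
    exact_mod_cast ha
  rw [Nat.card_eq_fintype_card, Fintype.card_subtype,
    DiagonalCubic.card_primitive_solutions (pow_dvd_pow 3 (by omega : 2 ≤ k)) hA]
  push_cast
  field_simp
  ring
end

section
/- The area of the planar region {(y,z) ∈ R² : y > 0, z > 0, z − y < 1, y + z < 2, 2y − z < 1} equals 1; the region is the pentagon with vertices (0,0), (1/2,0), (1,1), (1/2,3/2), (0,1). -/
open MeasureTheory Set

theorem alpha_rank_three_region_area :
    volume {q : ℝ × ℝ | 0 < q.1 ∧ 0 < q.2 ∧ q.2 - q.1 < 1 ∧ q.1 + q.2 < 2 ∧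
      2 * q.1 - q.2 < 1} = 1 := by
  set f : ℝ → ℝ := fun y => max 0 (2 * y - 1) with hf
  set g : ℝ → ℝ := fun y => min (y + 1) (2 - y) with hg
  have hcf : Continuous f := continuous_const.max (by continuity)
  have hcg : Continuous g := (by continuity : Continuous fun y : ℝ => y + 1).min (by continuity)
  have hset : {q : ℝ × ℝ | 0 < q.1 ∧ 0 < q.2 ∧ q.2 - q.1 < 1 ∧ q.1 + q.2 < 2 ∧
      2 * q.1 - q.2 < 1} = regionBetween f g (Ioo 0 1) := by
    ext ⟨y, z⟩
    simp only [regionBetween, mem_setOf_eq, mem_Ioo, hf, hg, max_lt_iff, lt_min_iff]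
    constructor
    · rintro ⟨h1, h2, h3, h4, h5⟩
      refine ⟨⟨h1, by linarith⟩, ⟨h2, by linarith⟩, by linarith, by linarith⟩
    · rintro ⟨⟨h1, h2⟩, ⟨h3, h4⟩, h5, h6⟩
      exact ⟨h1, h3, by linarith, by linarith, by linarith⟩
  rw [hset, Measure.volume_eq_prod,
    volume_regionBetween_eq_integral
      (hcf.integrableOn_Icc.mono_set Ioo_subset_Icc_self) (hcg.integrableOn_Icc.mono_set Ioo_subset_Icc_self) measurableSet_Ioo
      (fun x hx => by
        simp only [hf, hg, mem_Ioo] at *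
        simp only [sup_le_iff, le_inf_iff]
        refine ⟨⟨?_, ?_⟩, ?_, ?_⟩ <;> linarith [hx.1, hx.2])]
  simp only [Pi.sub_apply]
  have : (∫ y in Ioo (0:ℝ) 1, (g y - f y)) = 1 := by
    rw [← integral_Ioc_eq_integral_Ioo, ← intervalIntegral.integral_of_le (by norm_num : (0:ℝ) ≤ 1)]
    have hint : ∀ a b : ℝ, IntervalIntegrable (fun y => g y - f y) volume a b :=
      fun a b => ((hcg.sub hcf).intervalIntegrable a b)
    rw [← intervalIntegral.integral_add_adjacent_intervals (hint 0 (1/2)) (hint (1/2) 1)]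
    have h1 : ∫ y in (0:ℝ)..(1/2), (g y - f y) = ∫ y in (0:ℝ)..(1/2), (y + 1) := by
      apply intervalIntegral.integral_congr
      intro y hy
      rw [uIcc_of_le (by norm_num)] at hy
      obtain ⟨hy1, hy2⟩ := hy
      simp only [hf, hg]
      rw [max_eq_left (by linarith), min_eq_left (by linarith)]
      ring
    have h2 : ∫ y in (1/2:ℝ)..1, (g y - f y) = ∫ y in (1/2:ℝ)..1, (3 - 3 * y) := by
      apply intervalIntegral.integral_congr
      intro y hy
      rw [uIcc_of_le (by norm_num)] at hy
      obtain ⟨hy1, hy2⟩ := hy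
      simp only [hf, hg]
      rw [max_eq_right (by linarith), min_eq_right (by linarith)]
      ring
    rw [h1, h2]
    have e1 : ∫ y in (0:ℝ)..(1/2), (y + 1) = 5/8 := by
      rw [intervalIntegral.integral_add intervalIntegral.intervalIntegrable_id
        intervalIntegrable_const, integral_id, intervalIntegral.integral_const]
      norm_num
    have e2 : ∫ y in (1/2:ℝ)..1, (3 - 3 * y) = 3/8 := by
      rw [intervalIntegral.integral_sub intervalIntegrable_const
        (intervalIntegral.intervalIntegrable_id.const_mul 3),
        intervalIntegral.integral_const_mul, integral_id,
        intervalIntegral.integral_const]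
      norm_num
    rw [e1, e2]; norm_num
  rw [this]; norm_num
end

section
/- The volume of the region P = {(x,y,z) ∈ R³ : y > 0, z > 0, x − y > 0, 2x − z > 0, 1 − 2x + y + z > 0, 1 + y − z > 0, 1 − x > 0, 1 + x − y − z > 0, 1 − x − y + z > 0} equals 7/18. -/
open MeasureTheory

open Set in
private lemma lin_int' (a b c d : ℝ) :
    (∫ y in a..b, (c + d*y)) = c*(b-a) + d*(b^2-a^2)/2 := by
  have h1 : IntervalIntegrable (fun _ : ℝ => c) volume a b := intervalIntegrable_const
  have h2 : IntervalIntegrable (fun y : ℝ => d*y) volume a b :=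
    (continuous_const.mul continuous_id).intervalIntegrable a b
  rw [intervalIntegral.integral_add h1 h2, intervalIntegral.integral_const,
    intervalIntegral.integral_const_mul, integral_id]
  simp [smul_eq_mul]; ring

open Set in
private lemma quad_int' (a b c d e : ℝ) :
    (∫ x in a..b, (c + d*x + e*x^2)) = c*(b-a) + d*(b^2-a^2)/2 + e*(b^3-a^3)/3 := by
  have h1 : IntervalIntegrable (fun y : ℝ => c + d*y) volume a b :=
    (continuous_const.add (continuous_const.mul continuous_id)).intervalIntegrable a b
  have h2 : IntervalIntegrable (fun y : ℝ => e*y^2) volume a b :=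
    (continuous_const.mul (continuous_pow 2)).intervalIntegrable a b
  rw [intervalIntegral.integral_add h1 h2, lin_int',
    intervalIntegral.integral_const_mul, integral_pow]
  norm_num; ring

private lemma f2_eq' (x y : ℝ) :
    min (2*x) (min (1+y) (1+x-y)) - max 0 (max (2*x-1-y) (x+y-1))
      = min (2*x) (min (2-2*x+2*y) (2-2*y)) := by
  simp only [min_def, max_def]
  split_ifs <;> linarith

private lemma f2_cont' (x : ℝ) :
    Continuous (fun y : ℝ => min (2*x) (min (2-2*x+2*y) (2-2*y))) := by
  apply continuous_const.min
  exact (continuous_const.add (continuous_const.mul continuous_id)).min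
    (continuous_const.sub (continuous_const.mul continuous_id))

private lemma f2_intInt' (x a b : ℝ) :
    IntervalIntegrable (fun y : ℝ => min (2*x) (min (2-2*x+2*y) (2-2*y))) volume a b :=
  (f2_cont' x).intervalIntegrable a b

open Set in
private lemma slice_z' (x y : ℝ) :
    {z : ℝ | 0 < y ∧ 0 < z ∧ 0 < x - y ∧ 0 < 2 * x - z ∧ 0 < 1 - 2 * x + y + z ∧
      0 < 1 + y - z ∧ 0 < 1 - x ∧ 0 < 1 + x - y - z ∧ 0 < 1 - x - y + z} =
    if 0 < y ∧ y < x ∧ x < 1 then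
      Ioo (max 0 (max (2*x-1-y) (x+y-1))) (min (2*x) (min (1+y) (1+x-y))) else ∅ := by
  split_ifs with h
  · obtain ⟨c1, c2, c3⟩ := h
    ext z
    simp only [mem_setOf_eq, mem_Ioo, max_lt_iff, lt_min_iff]
    constructor
    · rintro ⟨h1,h2,h3,h4,h5,h6,h7,h8,h9⟩
      exact ⟨⟨h2, by linarith, by linarith⟩, by linarith, by linarith, by linarith⟩
    · rintro ⟨⟨a1,a2,a3⟩,b1,b2,b3⟩
      exact ⟨c1, a1, by linarith, by linarith, by linarith, by linarith, by linarith,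
        by linarith, by linarith⟩
  · ext z
    simp only [mem_setOf_eq, mem_empty_iff_false, iff_false, not_and]
    push_neg at h
    rintro h1 _ h3 _ _ _ h7
    exact absurd (h h1 (by linarith)) (by linarith)

open Set in
private lemma volume_slice' (x y : ℝ) :
    volume {z : ℝ | 0 < y ∧ 0 < z ∧ 0 < x - y ∧ 0 < 2 * x - z ∧ 0 < 1 - 2 * x + y + z ∧
      0 < 1 + y - z ∧ 0 < 1 - x ∧ 0 < 1 + x - y - z ∧ 0 < 1 - x - y + z} =
    if 0 < y ∧ y < x ∧ x < 1 then
      ENNReal.ofReal (min (2*x) (min (2-2*x+2*y) (2-2*y))) else 0 := by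
  rw [slice_z']
  split_ifs with h
  · rw [Real.volume_Ioo]
    congr 1
    exact f2_eq' x y
  · simp

open Set in
private lemma inner_integral' (x : ℝ) (hx0 : 0 < x) (hx1 : x < 1) :
    (∫ y in (0:ℝ)..x, min (2*x) (min (2-2*x+2*y) (2-2*y)))
      = (if x ≤ 1/2 then 2*x^2 else if x ≤ 2/3 then -6*x^2+8*x-2 else 2*x-3/2*x^2) := by
  split_ifs with h1 h2
  · rw [intervalIntegral.integral_congr (g := fun _ => x*0 + 0 + 2*x)]
    · rw [intervalIntegral.integral_const]; simp only [smul_eq_mul]; ring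
    · intro y hy
      rw [uIcc_of_le hx0.le] at hy
      simp only
      rw [min_eq_left (le_min (by linarith [hy.1, hy.2]) (by linarith [hy.1, hy.2]))]
      ring
  · push_neg at h1
    rw [← intervalIntegral.integral_add_adjacent_intervals (b := 2*x-1)
        (f2_intInt' x _ _) (f2_intInt' x _ _),
      ← intervalIntegral.integral_add_adjacent_intervals (a := 2*x-1) (b := 1-x)
        (f2_intInt' x _ _) (f2_intInt' x _ _)]
    rw [intervalIntegral.integral_congr (g := fun y => (2-2*x) + 2*y)
        (by intro y hy
            rw [uIcc_of_le (by linarith)] at hy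
            obtain ⟨ha, hb⟩ := hy
            simp only
            rw [min_eq_left (a := 2-2*x+2*y) (b := 2-2*y) (by linarith),
              min_eq_right (by linarith)]),
      intervalIntegral.integral_congr (a := 2*x-1) (b := 1-x) (g := fun y => 2*x + 0*y)
        (by intro y hy
            rw [uIcc_of_le (by linarith)] at hy
            obtain ⟨ha, hb⟩ := hy
            simp only
            rw [min_eq_left (le_min (by linarith) (by linarith))]
            ring),
      intervalIntegral.integral_congr (a := 1-x) (b := x) (g := fun y => 2 + (-2)*y)
        (by intro y hy
            rw [uIcc_of_le (by linarith)] at hy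
            obtain ⟨ha, hb⟩ := hy
            simp only
            rw [min_eq_right (a := 2-2*x+2*y) (b := 2-2*y) (by linarith),
              min_eq_right (by linarith)]
            ring),
      lin_int', lin_int', lin_int']
    ring
  · push_neg at h1 h2
    rw [← intervalIntegral.integral_add_adjacent_intervals (b := x/2)
        (f2_intInt' x _ _) (f2_intInt' x _ _)]
    rw [intervalIntegral.integral_congr (g := fun y => (2-2*x) + 2*y)
        (by intro y hy
            rw [uIcc_of_le (by linarith)] at hy
            obtain ⟨ha, hb⟩ := hy
            simp only
            rw [min_eq_left (a := 2-2*x+2*y) (b := 2-2*y) (by linarith),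
              min_eq_right (by linarith)]),
      intervalIntegral.integral_congr (a := x/2) (b := x) (g := fun y => 2 + (-2)*y)
        (by intro y hy
            rw [uIcc_of_le (by linarith)] at hy
            obtain ⟨ha, hb⟩ := hy
            simp only
            rw [min_eq_right (a := 2-2*x+2*y) (b := 2-2*y) (by linarith),
              min_eq_right (by linarith)]
            ring),
      lin_int', lin_int']
    ring

noncomputable def Gf' : ℝ → ℝ :=
  fun x => if x ≤ 1/2 then 2*x^2 else if x ≤ 2/3 then -6*x^2+8*x-2 else 2*x-3/2*x^2

private lemma Gf'_meas : Measurable Gf' := by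
  unfold Gf'
  exact Measurable.ite (measurableSet_le measurable_id measurable_const) (by fun_prop)
    (Measurable.ite (measurableSet_le measurable_id measurable_const) (by fun_prop) (by fun_prop))

open Set in
private lemma Gf'_intOn : IntegrableOn Gf' (Icc (0:ℝ) 1) volume := by
  apply Measure.integrableOn_of_bounded (M := 12)
  · simp [Real.volume_Icc]
  · exact Gf'_meas.aestronglyMeasurable
  · filter_upwards [ae_restrict_mem measurableSet_Icc] with x hx
    obtain ⟨h0, h1⟩ := hx
    rw [Real.norm_eq_abs, abs_le]
    unfold Gf'
    split_ifs <;> constructor <;> nlinarith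

open Set in
private lemma Gf'_integral : (∫ x in (0:ℝ)..1, Gf' x) = 7/18 := by
  have hsub : ∀ a b : ℝ, 0 ≤ a → a ≤ b → b ≤ 1 → IntervalIntegrable Gf' volume a b := by
    intro a b ha hab hb
    apply IntegrableOn.intervalIntegrable
    rw [uIcc_of_le hab]
    exact Gf'_intOn.mono_set (Icc_subset_Icc ha hb)
  rw [← intervalIntegral.integral_add_adjacent_intervals (b := 2/3)
      (hsub 0 (2/3) (by norm_num) (by norm_num) (by norm_num))
      (hsub (2/3) 1 (by norm_num) (by norm_num) (by norm_num)),
    ← intervalIntegral.integral_add_adjacent_intervals (b := 1/2)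
      (hsub 0 (1/2) (by norm_num) (by norm_num) (by norm_num))
      (hsub (1/2) (2/3) (by norm_num) (by norm_num) (by norm_num))]
  have e1 : (∫ x in (0:ℝ)..(1/2), Gf' x) = ∫ x in (0:ℝ)..(1/2), (0 + 0*x + 2*x^2) := by
    apply intervalIntegral.integral_congr
    intro x hx
    rw [uIcc_of_le (by norm_num)] at hx
    unfold Gf'
    simp only
    rw [if_pos hx.2]; ring
  have e2 : (∫ x in (1/2:ℝ)..(2/3), Gf' x) = ∫ x in (1/2:ℝ)..(2/3), (-2 + 8*x + (-6)*x^2) := by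
    apply intervalIntegral.integral_congr
    intro x hx
    rw [uIcc_of_le (by norm_num)] at hx
    unfold Gf'
    simp only
    split_ifs with h1 h2
    · have : x = 1/2 := le_antisymm h1 hx.1
      subst this; norm_num
    · ring
    · exact absurd hx.2 h2
  have e3 : (∫ x in (2/3:ℝ)..1, Gf' x) = ∫ x in (2/3:ℝ)..1, (0 + 2*x + (-3/2)*x^2) := by
    apply intervalIntegral.integral_congr
    intro x hx
    rw [uIcc_of_le (by norm_num)] at hx
    unfold Gf'
    simp only
    split_ifs with h1 h2
    · exact absurd hx.1 (by norm_num; linarith)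
    · have : x = 2/3 := le_antisymm h2 hx.1
      subst this; norm_num
    · ring
  rw [e1, e2, e3, quad_int', quad_int', quad_int']
  norm_num

open Set in
private lemma inner_lintegral' (x : ℝ) :
    (∫⁻ y : ℝ, if 0 < y ∧ y < x ∧ x < 1 then
        ENNReal.ofReal (min (2*x) (min (2-2*x+2*y) (2-2*y))) else 0)
      = if 0 < x ∧ x < 1 then ENNReal.ofReal (Gf' x) else 0 := by
  by_cases hx : 0 < x ∧ x < 1
  · rw [if_pos hx]
    have heq : (fun y : ℝ => if 0 < y ∧ y < x ∧ x < 1 then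
        ENNReal.ofReal (min (2*x) (min (2-2*x+2*y) (2-2*y))) else 0)
        = (Ioo (0:ℝ) x).indicator
          (fun y => ENNReal.ofReal (min (2*x) (min (2-2*x+2*y) (2-2*y)))) := by
      funext y
      rw [Set.indicator_apply]
      simp only [mem_Ioo]
      exact if_congr ⟨fun ⟨a,b,_⟩ => ⟨a,b⟩, fun ⟨a,b⟩ => ⟨a,b,hx.2⟩⟩ rfl rfl
    rw [heq, lintegral_indicator measurableSet_Ioo,
      ← ofReal_integral_eq_lintegral_ofReal
        (((f2_cont' x).integrableOn_Icc).mono_set Ioo_subset_Icc_self)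
        (by filter_upwards [ae_restrict_mem measurableSet_Ioo] with y hy
            simp only [Pi.zero_apply]
            exact le_min (by linarith [hx.1])
              (le_min (by linarith [hy.1, hx.2]) (by linarith [hy.2, hx.2]))),
      ← integral_Ioc_eq_integral_Ioo, ← intervalIntegral.integral_of_le hx.1.le,
      inner_integral' x hx.1 hx.2]
    rfl
  · rw [if_neg hx]
    have : ∀ y : ℝ, (if 0 < y ∧ y < x ∧ x < 1 then
        ENNReal.ofReal (min (2*x) (min (2-2*x+2*y) (2-2*y))) else 0) = 0 := by
      intro y
      rw [if_neg]
      rintro ⟨a, b, c⟩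
      exact hx ⟨lt_trans a b, c⟩
    simp only [this, lintegral_const]
    simp

open Set in
theorem alpha_fermat_cubic_polytope_volume :
    volume {q : ℝ × ℝ × ℝ | 0 < q.2.1 ∧ 0 < q.2.2 ∧ 0 < q.1 - q.2.1 ∧ 0 < 2 * q.1 - q.2.2 ∧
      0 < 1 - 2 * q.1 + q.2.1 + q.2.2 ∧ 0 < 1 + q.2.1 - q.2.2 ∧ 0 < 1 - q.1 ∧
      0 < 1 + q.1 - q.2.1 - q.2.2 ∧ 0 < 1 - q.1 - q.2.1 + q.2.2} =
      ENNReal.ofReal (7 / 18) := by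
  set S : Set (ℝ × ℝ × ℝ) :=
    {q : ℝ × ℝ × ℝ | 0 < q.2.1 ∧ 0 < q.2.2 ∧ 0 < q.1 - q.2.1 ∧ 0 < 2 * q.1 - q.2.2 ∧
      0 < 1 - 2 * q.1 + q.2.1 + q.2.2 ∧ 0 < 1 + q.2.1 - q.2.2 ∧ 0 < 1 - q.1 ∧
      0 < 1 + q.1 - q.2.1 - q.2.2 ∧ 0 < 1 - q.1 - q.2.1 + q.2.2} with hSdef
  have hS : MeasurableSet S := by
    rw [hSdef]
    simp only [setOf_and]
    repeat
      apply MeasurableSet.inter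
      · exact measurableSet_lt measurable_const (by fun_prop)
    exact measurableSet_lt measurable_const (by fun_prop)
  rw [show (volume : Measure (ℝ × ℝ × ℝ)) = (volume : Measure ℝ).prod volume from rfl,
    Measure.prod_apply hS]
  have step1 : ∀ x : ℝ, (volume : Measure (ℝ × ℝ)) (Prod.mk x ⁻¹' S)
      = if 0 < x ∧ x < 1 then ENNReal.ofReal (Gf' x) else 0 := by
    intro x
    rw [show (volume : Measure (ℝ × ℝ)) = (volume : Measure ℝ).prod volume from rfl,
      Measure.prod_apply (hS.preimage measurable_prodMk_left)]
    have step0 : ∀ y : ℝ, (volume : Measure ℝ) (Prod.mk y ⁻¹' (Prod.mk x ⁻¹' S))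
        = if 0 < y ∧ y < x ∧ x < 1 then
            ENNReal.ofReal (min (2*x) (min (2-2*x+2*y) (2-2*y))) else 0 := by
      intro y
      rw [show Prod.mk y ⁻¹' (Prod.mk x ⁻¹' S) =
        {z : ℝ | 0 < y ∧ 0 < z ∧ 0 < x - y ∧ 0 < 2 * x - z ∧ 0 < 1 - 2 * x + y + z ∧
          0 < 1 + y - z ∧ 0 < 1 - x ∧ 0 < 1 + x - y - z ∧ 0 < 1 - x - y + z} from rfl]
      exact volume_slice' x y
    rw [lintegral_congr step0]
    exact inner_lintegral' x
  rw [lintegral_congr step1]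
  have heq : (fun x : ℝ => if 0 < x ∧ x < 1 then ENNReal.ofReal (Gf' x) else 0)
      = (Ioo (0:ℝ) 1).indicator (fun x => ENNReal.ofReal (Gf' x)) := by
    funext x
    rw [Set.indicator_apply]
    simp only [mem_Ioo]
  rw [heq, lintegral_indicator measurableSet_Ioo,
    ← ofReal_integral_eq_lintegral_ofReal
      (Gf'_intOn.mono_set Ioo_subset_Icc_self)
      (by filter_upwards [ae_restrict_mem measurableSet_Ioo] with x hx
          simp only [Pi.zero_apply]
          unfold Gf'
          obtain ⟨h0, h1⟩ := hx
          split_ifs <;> nlinarith),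
    ← integral_Ioc_eq_integral_Ioo, ← intervalIntegral.integral_of_le (by norm_num : (0:ℝ) ≤ 1),
    Gf'_integral]
end

section
/- Let p be a prime with p ≡ 1 (mod 3) and let χ be a nontrivial cubic character of F_p* (extended by χ(0) = 0). Then the Jacobi-type sum J₀(χ₁,χ₂,χ₃,χ₄) = Σ_{t₁+t₂+t₃+t₄=0} χ₁(t₁)χ₂(t₂)χ₃(t₃)χ₄(t₄), taken over quadruples of nontrivial cubic characters with χ₁χ₂χ₃χ₄ = 1, satisfies J₀(χ₁,χ₂,χ₃,χ₄) = p(p−1). -/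
open Finset

-- two nontrivial cube roots of unity with nontrivial product are equal
lemma cube_root_eq_aux {a b : ℂ} (ha : a ^ 3 = 1) (hb : b ^ 3 = 1) (ha1 : a ≠ 1)
    (hb1 : b ≠ 1) (hab : a * b ≠ 1) : a = b := by
  have ha' : a ^ 2 + a + 1 = 0 := by
    have h : (a - 1) * (a ^ 2 + a + 1) = 0 := by linear_combination ha
    rcases mul_eq_zero.mp h with h | h
    · exact absurd (sub_eq_zero.mp h) ha1
    · exact h
  have hb' : b ^ 2 + b + 1 = 0 := by
    have h : (b - 1) * (b ^ 2 + b + 1) = 0 := by linear_combination hb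
    rcases mul_eq_zero.mp h with h | h
    · exact absurd (sub_eq_zero.mp h) hb1
    · exact h
  by_contra hne
  have h2 : (a - b) * (a + b + 1) = 0 := by linear_combination ha' - hb'
  rcases mul_eq_zero.mp h2 with h | h
  · exact hne (sub_eq_zero.mp h)
  · -- b = -a - 1 = a^2, so a*b = a^3 = 1
    apply hab
    have hb2 : b = a ^ 2 := by linear_combination h - ha'
    rw [hb2]; linear_combination ha

lemma mulchar_cube_neg_one {p : ℕ} [Fact p.Prime] {χ : MulChar (ZMod p) ℂ}
    (h : χ ^ 3 = 1) : χ (-1) = 1 := by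
  have h2 : χ (-1) * χ (-1) = 1 := by
    rw [← map_mul]; norm_num
  have h3 : χ (-1) ^ 3 = 1 := by
    rw [← MulChar.pow_apply' χ (three_ne_zero) (-1), h]
    exact MulChar.one_apply (isUnit_one.neg)
  linear_combination h3 - χ (-1) * h2

lemma mulchar_eq_of_gen {p : ℕ} [Fact p.Prime] (g : (ZMod p)ˣ)
    (hg : ∀ x : (ZMod p)ˣ, x ∈ Subgroup.zpowers g) {χ ψ : MulChar (ZMod p) ℂ}
    (h : χ (g : ZMod p) = ψ (g : ZMod p)) : χ = ψ := by
  apply MulChar.ext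
  intro a
  obtain ⟨k, hk⟩ := mem_powers_iff_mem_zpowers.mpr (hg a)
  rw [← hk]
  push_cast
  rw [map_pow, map_pow, h]

lemma mulchar_cube_eq {p : ℕ} [Fact p.Prime] {χ ψ : MulChar (ZMod p) ℂ}
    (hχ3 : χ ^ 3 = 1) (hψ3 : ψ ^ 3 = 1) (hχ : χ ≠ 1) (hψ : ψ ≠ 1)
    (h : χ * ψ ≠ 1) : χ = ψ := by
  obtain ⟨g, hg⟩ := IsCyclic.exists_generator (α := (ZMod p)ˣ)
  apply mulchar_eq_of_gen g hg
  apply cube_root_eq_aux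
  · rw [← MulChar.pow_apply_coe, hχ3, MulChar.one_apply_coe]
  · rw [← MulChar.pow_apply_coe, hψ3, MulChar.one_apply_coe]
  · intro h1
    exact hχ (mulchar_eq_of_gen g hg (h1.trans (MulChar.one_apply_coe g).symm))
  · intro h1
    exact hψ (mulchar_eq_of_gen g hg (h1.trans (MulChar.one_apply_coe g).symm))
  · intro h1
    apply h
    apply mulchar_eq_of_gen g hg
    rw [MulChar.mul_apply, h1, MulChar.one_apply_coe]

lemma sum_mulchar_shift {p : ℕ} [Fact p.Prime] (χ ψ : MulChar (ZMod p) ℂ)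
    {u : ZMod p} (hu : u ≠ 0) :
    ∑ t : ZMod p, χ t * ψ (u - t) = χ u * ψ u * jacobiSum χ ψ := by
  rw [jacobiSum, Finset.mul_sum]
  rw [← Equiv.sum_comp (Equiv.mulLeft₀ u hu) (fun t => χ t * ψ (u - t))]
  refine Finset.sum_congr rfl fun x _ => ?_
  simp only [Equiv.mulLeft₀_apply]
  rw [show u - u * x = u * (1 - x) by ring, map_mul, map_mul]
  ring

lemma sum_mulchar_zero_ne {p : ℕ} [Fact p.Prime] (χ ψ : MulChar (ZMod p) ℂ)
    (h : χ * ψ ≠ 1) :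
    ∑ t : ZMod p, χ t * ψ (0 - t) = 0 := by
  have key : ∀ t : ZMod p, χ t * ψ (0 - t) = ψ (-1) * (χ * ψ) t := by
    intro t
    rw [zero_sub, show (-t : ZMod p) = (-1) * t by ring, map_mul, MulChar.mul_apply]
    ring
  simp_rw [key]
  rw [← Finset.mul_sum, MulChar.sum_eq_zero_of_ne_one h, mul_zero]

lemma sum_mulchar_zero_inv {p : ℕ} [Fact p.Prime] (χ : MulChar (ZMod p) ℂ)
    (hχ3 : χ ^ 3 = 1) :
    ∑ t : ZMod p, χ t * χ⁻¹ (0 - t) = (p : ℂ) - 1 := by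
  have hinv3 : χ⁻¹ ^ 3 = 1 := by rw [inv_pow, hχ3, inv_one]
  have key : ∀ t : ZMod p, χ t * χ⁻¹ (0 - t) = (1 : MulChar (ZMod p) ℂ) t := by
    intro t
    rw [zero_sub, show (-t : ZMod p) = (-1) * t by ring, map_mul,
      mulchar_cube_neg_one hinv3, one_mul, ← MulChar.mul_apply, mul_inv_cancel]
  simp_rw [key]
  rw [MulChar.sum_one_eq_card_units, ZMod.card_units]
  have hp : 1 ≤ p := (Fact.out : p.Prime).one_lt.le
  push_cast [hp]
  ring

theorem jacobi_sum_cubic_characters (p : ℕ) [Fact p.Prime] (h3 : p % 3 = 1)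
    (χ₁ χ₂ χ₃ χ₄ : MulChar (ZMod p) ℂ)
    (h₁ : χ₁ ≠ 1) (h₂ : χ₂ ≠ 1) (h₃ : χ₃ ≠ 1) (h₄ : χ₄ ≠ 1)
    (hc₁ : χ₁ ^ 3 = 1) (hc₂ : χ₂ ^ 3 = 1) (hc₃ : χ₃ ^ 3 = 1) (hc₄ : χ₄ ^ 3 = 1)
    (hprod : χ₁ * χ₂ * χ₃ * χ₄ = 1) :
    ∑ t ∈ Finset.univ.filter
        (fun t : ZMod p × ZMod p × ZMod p × ZMod p =>
          t.1 + t.2.1 + t.2.2.1 + t.2.2.2 = 0),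
      χ₁ t.1 * χ₂ t.2.1 * χ₃ t.2.2.1 * χ₄ t.2.2.2 = (p : ℂ) * ((p : ℂ) - 1) := by
  have hp1 : 1 ≤ p := (Fact.out : p.Prime).one_lt.le
  set A : ZMod p → ℂ := fun u => ∑ t : ZMod p, χ₁ t * χ₂ (u - t) with hA
  set B : ZMod p → ℂ := fun v => ∑ t : ZMod p, χ₃ t * χ₄ (v - t) with hB
  have step1 : ∑ t ∈ Finset.univ.filter
        (fun t : ZMod p × ZMod p × ZMod p × ZMod p =>
          t.1 + t.2.1 + t.2.2.1 + t.2.2.2 = 0),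
      χ₁ t.1 * χ₂ t.2.1 * χ₃ t.2.2.1 * χ₄ t.2.2.2 =
      ∑ x : ZMod p × ZMod p × ZMod p,
        χ₁ x.1 * χ₂ x.2.1 * χ₃ x.2.2 * χ₄ (-(x.1 + x.2.1 + x.2.2)) := by
    refine Finset.sum_nbij' (fun t => (t.1, t.2.1, t.2.2.1))
      (fun x => (x.1, x.2.1, x.2.2, -(x.1 + x.2.1 + x.2.2))) ?_ ?_ ?_ ?_ ?_
    · intro a _; exact Finset.mem_univ _
    · intro x _
      simp only [Finset.mem_filter, Finset.mem_univ, true_and]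
      ring
    · intro a ha
      simp only [Finset.mem_filter, Finset.mem_univ, true_and] at ha
      refine Prod.ext rfl (Prod.ext rfl (Prod.ext rfl ?_))
      simp only
      linear_combination -ha
    · intro x _; rfl
    · intro a ha
      simp only [Finset.mem_filter, Finset.mem_univ, true_and] at ha
      have h4 : a.2.2.2 = -(a.1 + a.2.1 + a.2.2.1) := by linear_combination ha
      rw [h4]
  rw [step1]
  have step2 : ∑ x : ZMod p × ZMod p × ZMod p,
        χ₁ x.1 * χ₂ x.2.1 * χ₃ x.2.2 * χ₄ (-(x.1 + x.2.1 + x.2.2)) =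
      ∑ u : ZMod p, A u * B (-u) := by
    simp only [Fintype.sum_prod_type]
    have inner : ∀ t1 t2 : ZMod p,
        ∑ t3 : ZMod p, χ₁ t1 * χ₂ t2 * χ₃ t3 * χ₄ (-(t1 + t2 + t3)) =
        χ₁ t1 * χ₂ t2 * B (-(t1 + t2)) := by
      intro t1 t2
      rw [hB]
      simp only
      rw [Finset.mul_sum]
      refine Finset.sum_congr rfl fun t3 _ => ?_
      rw [show -(t1 + t2 + t3) = -(t1 + t2) - t3 by ring]
      ring
    simp_rw [inner]
    have inner2 : ∀ t1 : ZMod p,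
        ∑ t2 : ZMod p, χ₁ t1 * χ₂ t2 * B (-(t1 + t2)) =
        ∑ u : ZMod p, χ₁ t1 * χ₂ (u - t1) * B (-u) := by
      intro t1
      rw [← Equiv.sum_comp (Equiv.addLeft t1)
        (fun u => χ₁ t1 * χ₂ (u - t1) * B (-u))]
      refine Finset.sum_congr rfl fun t2 _ => ?_
      simp [Equiv.coe_addLeft, add_sub_cancel_left]
    simp_rw [inner2]
    rw [Finset.sum_comm]
    refine Finset.sum_congr rfl fun u _ => ?_
    rw [hA]
    simp only
    rw [Finset.sum_mul]
  rw [step2]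
  rw [← Finset.add_sum_erase _ (fun u => A u * B (-u)) (Finset.mem_univ (0 : ZMod p))]
  by_cases h12 : χ₁ * χ₂ = 1
  · -- Case 1 : χ₂ = χ₁⁻¹, χ₄ = χ₃⁻¹
    have hχ₂ : χ₂ = χ₁⁻¹ := (inv_eq_of_mul_eq_one_right h12).symm
    have h34 : χ₃ * χ₄ = 1 := by
      have h' := hprod
      rw [show χ₁ * χ₂ * χ₃ * χ₄ = χ₁ * χ₂ * (χ₃ * χ₄) by group, h12, one_mul] at h'
      exact h'
    have hχ₄ : χ₄ = χ₃⁻¹ := (inv_eq_of_mul_eq_one_right h34).symm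
    have hA0 : A 0 = (p : ℂ) - 1 := by
      rw [hA]; simp only
      rw [hχ₂]
      exact sum_mulchar_zero_inv χ₁ hc₁
    have hB0 : B (-0) = (p : ℂ) - 1 := by
      rw [hB, neg_zero]; simp only
      rw [hχ₄]
      exact sum_mulchar_zero_inv χ₃ hc₃
    have hterm : ∀ u ∈ Finset.univ.erase (0 : ZMod p), A u * B (-u) = 1 := by
      intro u hu
      have hu0 : u ≠ 0 := (Finset.mem_erase.mp hu).1
      have hu0' : -u ≠ 0 := neg_ne_zero.mpr hu0
      have hAu : A u = -1 := by
        rw [hA]; simp only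
        rw [sum_mulchar_shift χ₁ χ₂ hu0, hχ₂, jacobiSum_nontrivial_inv h₁,
          mulchar_cube_neg_one hc₁, ← MulChar.mul_apply, mul_inv_cancel,
          MulChar.one_apply hu0.isUnit]
        ring
      have hBu : B (-u) = -1 := by
        rw [hB]; simp only
        rw [sum_mulchar_shift χ₃ χ₄ hu0', hχ₄, jacobiSum_nontrivial_inv h₃,
          mulchar_cube_neg_one hc₃, ← MulChar.mul_apply, mul_inv_cancel,
          MulChar.one_apply hu0'.isUnit]
        ring
      rw [hAu, hBu]; ring
    rw [hA0, hB0, Finset.sum_congr rfl hterm, Finset.sum_const,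
      Finset.card_erase_of_mem (Finset.mem_univ _), Finset.card_univ, ZMod.card,
      nsmul_eq_mul, Nat.cast_sub hp1]
    push_cast
    ring
  · -- Case 2 : χ₂ = χ₁, χ₃ = χ₄ = χ₁⁻¹
    have hχ₂ : χ₂ = χ₁ := (mulchar_cube_eq hc₁ hc₂ h₁ h₂ h12).symm
    have h34 : χ₃ * χ₄ = χ₁ := by
      have h' := hprod
      rw [hχ₂] at h'
      have e1 : χ₁ * (χ₁ * χ₁ * χ₃ * χ₄) = χ₃ * χ₄ := by
        rw [show χ₁ * (χ₁ * χ₁ * χ₃ * χ₄) = χ₁ ^ 3 * (χ₃ * χ₄) by simp [pow_succ, mul_assoc], hc₁, one_mul]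
      rw [← e1, h', mul_one]
    have h34' : χ₃ * χ₄ ≠ 1 := by rw [h34]; exact h₁
    have hχ₄ : χ₄ = χ₃ := (mulchar_cube_eq hc₃ hc₄ h₃ h₄ h34').symm
    have hχ₃ : χ₃ = χ₁⁻¹ := by
      have h' : χ₃ * χ₃ = χ₁ := by rw [← h34, hχ₄]
      have e2 : χ₃ = (χ₃ * χ₃)⁻¹ * χ₃ ^ 3 := by group
      rw [e2, hc₃, mul_one, h']
    have hinv3 : χ₁⁻¹ ^ 3 = 1 := by rw [inv_pow, hc₁, inv_one]
    have h2 : χ₁ * χ₁ ≠ 1 := fun hc => h12 (by rw [hχ₂]; exact hc)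
    have hJ : jacobiSum χ₁ χ₁ * jacobiSum χ₁⁻¹ χ₁⁻¹ = (p : ℂ) := by
      have hchar : ringChar ℂ ≠ ringChar (ZMod p) := by
        rw [ringChar.eq_zero, ZMod.ringChar_zmod_n]
        exact Ne.symm (Fact.out : p.Prime).ne_zero
      have := jacobiSum_mul_jacobiSum_inv hchar h₁ h₁ h2
      rwa [ZMod.card] at this
    have hA0 : A 0 = 0 := by
      rw [hA]; simp only
      exact sum_mulchar_zero_ne χ₁ χ₂ h12
    have hB0 : B (-0) = 0 := by
      rw [hB, neg_zero]; simp only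
      exact sum_mulchar_zero_ne χ₃ χ₄ h34'
    have hterm : ∀ u ∈ Finset.univ.erase (0 : ZMod p), A u * B (-u) = (p : ℂ) := by
      intro u hu
      have hu0 : u ≠ 0 := (Finset.mem_erase.mp hu).1
      have hu0' : -u ≠ 0 := neg_ne_zero.mpr hu0
      have hval : χ₁ u * χ₁⁻¹ u = 1 := by
        rw [← MulChar.mul_apply, mul_inv_cancel, MulChar.one_apply hu0.isUnit]
      have hnegu : χ₁⁻¹ (-u) = χ₁⁻¹ u := by
        rw [show (-u : ZMod p) = (-1) * u by ring, map_mul,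
          mulchar_cube_neg_one hinv3, one_mul]
      have hAu : A u = χ₁ u * χ₁ u * jacobiSum χ₁ χ₁ := by
        rw [hA]; simp only
        rw [sum_mulchar_shift χ₁ χ₂ hu0, hχ₂]
      have hBu : B (-u) = χ₁⁻¹ u * χ₁⁻¹ u * jacobiSum χ₁⁻¹ χ₁⁻¹ := by
        rw [hB]; simp only
        rw [sum_mulchar_shift χ₃ χ₄ hu0', hχ₄, hχ₃, hnegu]
      rw [hAu, hBu]
      calc χ₁ u * χ₁ u * jacobiSum χ₁ χ₁ * (χ₁⁻¹ u * χ₁⁻¹ u * jacobiSum χ₁⁻¹ χ₁⁻¹)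
          = (χ₁ u * χ₁⁻¹ u) * (χ₁ u * χ₁⁻¹ u) *
            (jacobiSum χ₁ χ₁ * jacobiSum χ₁⁻¹ χ₁⁻¹) := by ring
        _ = (p : ℂ) := by rw [hval, hJ]; ring
    rw [hA0, hB0, Finset.sum_congr rfl hterm, Finset.sum_const,
      Finset.card_erase_of_mem (Finset.mem_univ _), Finset.card_univ, ZMod.card,
      nsmul_eq_mul, Nat.cast_sub hp1]
    push_cast
    ring
end

section
/- Let p be a prime with p ≡ 1 (mod 3), let χ be one of the two nontrivial cubic characters of F_p*, and let a,b,c,d be nonzero elements of F_p. Then the number N(p) of solutions in F_p⁴ of a·x³+b·y³+c·z³+d·t³ = 0 satisfies N(p) = p³ + p(p−1)·[χ(ab/cd) + χ̄(ab/cd) + χ(ac/bd) + χ̄(ac/bd) + χ(ad/bc) + χ̄(ad/bc)]. -/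
/-!
Detect the zeros with a primitive additive character `ψ` of `F` (`q = #F`):
`q N = ∑ₛ S(s a) S(s b) S(s c) S(s d)` with `S(t) = ∑ₓ ψ(t x³)`. Since
`#{x | x³ = u} = 1 + χ u + χ u²`, for `t ≠ 0` one gets `S(t) = χ̄(t) g(χ) + χ(t) g(χ̄)` in terms
of Gauss sums with `g(χ) g(χ̄) = q`. The term `s = 0` is `q⁴`. For `s ≠ 0`, each of the products
`S(s a) S(s b)` and `S(s c) S(s d)` is a quadratic polynomial in `χ(s)`, and summing their product
over `s` keeps only the terms in which the powers of `χ(s)` cancel; these are `q²` times the six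
character values.
-/

open Finset

lemma natCard_mul_card_eq_sum_sum_addChar {R R' α : Type*} [CommRing R] [Fintype R]
    [DecidableEq R] [CommRing R'] [IsDomain R'] [Fintype α] {ψ : AddChar R R'}
    (hψ : ψ.IsPrimitive) (f : α → R) :
    (Nat.card {v // f v = 0} : R') * Fintype.card R = ∑ s, ∑ v, ψ (s * f v) := by
  rw [sum_comm]
  simp only [AddChar.sum_mulShift _ hψ, Nat.cast_ite, Nat.cast_zero]
  rw [sum_ite, sum_const_zero, add_zero, sum_const, nsmul_eq_mul, Nat.card_eq_fintype_card,
    Fintype.card_subtype]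

lemma sum_addChar_diagonal {R R' α : Type*} [CommRing R] [CommRing R'] [Fintype α]
    (ψ : AddChar R R') (s a b c d : R) (f : α → R) :
    ∑ v : α × α × α × α, ψ (s * (a * f v.1 + b * f v.2.1 + c * f v.2.2.1 + d * f v.2.2.2)) =
      (∑ x, ψ (s * a * f x)) * (∑ x, ψ (s * b * f x)) * (∑ x, ψ (s * c * f x)) *
        ∑ x, ψ (s * d * f x) := by
  simp only [Fintype.sum_prod_type, mul_add, ← mul_assoc, AddChar.map_add_eq_mul, ← mul_sum,
    ← sum_mul]

variable {F : Type*} [Field F]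

namespace MulChar

variable {χ : MulChar F ℂ}

lemma apply_pow_three_eq_one (hχ3 : χ ^ 3 = 1) {u : F} (hu : u ≠ 0) : χ u ^ 3 = 1 := by
  rw [← pow_apply' χ three_ne_zero, hχ3, one_apply (isUnit_iff_ne_zero.mpr hu)]

lemma inv_eq_sq_of_pow_three_eq_one (hχ3 : χ ^ 3 = 1) : χ⁻¹ = χ ^ 2 :=
  inv_eq_of_mul_eq_one_left (by rw [← pow_succ, hχ3])

lemma apply_div_of_pow_three_eq_one (hχ3 : χ ^ 3 = 1) (x y : F) :
    χ (x / y) = χ x * χ y ^ 2 := by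
  rw [div_eq_mul_inv, map_mul, ← inv_apply', inv_eq_sq_of_pow_three_eq_one hχ3,
    pow_apply' χ two_ne_zero]

variable [Fintype F]

lemma conj_apply_div (x y : F) : starRingEnd ℂ (χ (x / y)) = χ (y / x) := by
  rw [← RCLike.star_def, star_apply', inv_apply', inv_div]

lemma exists_pow_three_eq_of_apply_eq_one (hχ : χ ≠ 1) (hχ3 : χ ^ 3 = 1) {u : F} (hu : u ≠ 0)
    (h1 : χ u = 1) : ∃ v : F, v ^ 3 = u := by
  obtain ⟨g, hg⟩ := IsCyclic.exists_generator (α := Fˣ)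
  have hord : orderOf (χ.toUnitHom g) = 3 := by
    refine orderOf_eq_prime ?_ fun h ↦ hχ (eq_one_iff.mpr fun w ↦ ?_)
    · ext
      simp [apply_pow_three_eq_one hχ3 g.ne_zero]
    · obtain ⟨k, rfl⟩ := hg w
      rw [← coe_toUnitHom, map_zpow, h, one_zpow, Units.val_one]
  obtain ⟨k, hk⟩ : ∃ k : ℕ, g ^ k = Units.mk0 u hu := by
    rw [← Submonoid.mem_powers_iff, mem_powers_iff_mem_zpowers]
    exact hg _
  obtain ⟨m, rfl⟩ : 3 ∣ k := by
    rw [← hord, orderOf_dvd_iff_pow_eq_one, ← map_pow, hk]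
    ext
    simpa using h1
  refine ⟨(g ^ m : Fˣ), ?_⟩
  rw [← Units.val_pow_eq_pow_val, ← pow_mul, mul_comm, hk, Units.val_mk0]

lemma gaussSum_mul_gaussSum_sq (hχ : χ ≠ 1) (hχ3 : χ ^ 3 = 1) {ψ : AddChar F ℂ}
    (hψ : ψ.IsPrimitive) :
    gaussSum χ ψ * gaussSum (χ ^ 2) ψ = Fintype.card F := by
  have h := gaussSum_mul_gaussSum_pow_orderOf_sub_one hχ hψ
  rwa [orderOf_eq_prime hχ3 hχ, val_neg_one_eq_one_of_odd_order (by decide) hχ3, one_mul] at h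

variable [DecidableEq F]

lemma card_pow_three_eq_one (hχ : χ ≠ 1) (hχ3 : χ ^ 3 = 1) :
    #{x : F | x ^ 3 = 1} = 3 := by
  have h3 : 3 ∣ Fintype.card Fˣ := by
    rw [Fintype.card_units, ← orderOf_eq_prime hχ3 hχ]
    exact χ.orderOf_dvd_card_sub_one
  obtain ⟨ζ, hζ⟩ := exists_prime_orderOf_dvd_card 3 h3
  have hprim : IsPrimitiveRoot (ζ : F) 3 :=
    IsPrimitiveRoot.coe_units_iff.mpr (hζ ▸ IsPrimitiveRoot.orderOf ζ)
  have hroots : ({x : F | x ^ 3 = 1} : Finset F) = Polynomial.nthRootsFinset 3 (1 : F) := by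
    ext x
    simp [Polynomial.mem_nthRootsFinset three_pos]
  rw [hroots, hprim.card_nthRootsFinset]

lemma card_pow_three_eq (hχ : χ ≠ 1) (hχ3 : χ ^ 3 = 1) (u : F) :
    (#{x : F | x ^ 3 = u} : ℂ) = 1 + χ u + χ u ^ 2 := by
  obtain rfl | hu := eq_or_ne u 0
  · simp [filter_eq']
  by_cases h1 : χ u = 1
  · obtain ⟨v, rfl⟩ := exists_pow_three_eq_of_apply_eq_one hχ hχ3 hu h1
    have hv : v ≠ 0 := by rintro rfl; simp at hu
    have hcard : #{x : F | x ^ 3 = v ^ 3} = #{x : F | x ^ 3 = 1} := by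
      refine card_nbij' (· / v) (v * ·) ?_ ?_ ?_ ?_ <;> intro x hx
      · simp_all [div_pow]
      · simp_all [mul_pow]
      · field_simp
      · field_simp
    rw [hcard, card_pow_three_eq_one hχ hχ3, h1]
    norm_num
  · have hempty : ({x : F | x ^ 3 = u} : Finset F) = ∅ := by
      refine filter_false_of_mem fun x _ hx ↦ h1 ?_
      have hx0 : x ≠ 0 := by rintro rfl; simp_all
      rw [← hx, map_pow, apply_pow_three_eq_one hχ3 hx0]
    have hsum : (χ u - 1) * (1 + χ u + χ u ^ 2) = 0 := by
      linear_combination apply_pow_three_eq_one hχ3 hu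
    rw [hempty, card_empty, Nat.cast_zero,
      (mul_eq_zero.mp hsum).resolve_left (sub_ne_zero.mpr h1)]

lemma sum_erase_zero_trinomial_mul (hχ : χ ≠ 1) (hχ3 : χ ^ 3 = 1) (α₀ α₁ α₂ β₀ β₁ β₂ : ℂ) :
    ∑ s ∈ univ.erase 0, (α₀ + α₁ * χ s + α₂ * χ s ^ 2) * (β₀ + β₁ * χ s + β₂ * χ s ^ 2) =
      (Fintype.card F - 1) * (α₀ * β₀ + α₁ * β₂ + α₂ * β₁) := by
  have hχ2 : χ ^ 2 ≠ 1 := fun h ↦ hχ (by rw [← hχ3, pow_succ, h, one_mul])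
  have hsum (k : ℕ) (hk : k ≠ 0) (hχk : χ ^ k ≠ 1) : ∑ s ∈ univ.erase 0, χ s ^ k = 0 := by
    simp only [← pow_apply' χ hk]
    rw [sum_erase _ (χ ^ k).map_zero, sum_eq_zero_of_ne_one hχk]
  have hreduce : ∀ s ∈ univ.erase (0 : F),
      (α₀ + α₁ * χ s + α₂ * χ s ^ 2) * (β₀ + β₁ * χ s + β₂ * χ s ^ 2) =
        (α₀ * β₀ + α₁ * β₂ + α₂ * β₁) + (α₀ * β₁ + α₁ * β₀ + α₂ * β₂) * χ s ^ 1 +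
          (α₀ * β₂ + α₁ * β₁ + α₂ * β₀) * χ s ^ 2 := fun s hs ↦ by
    linear_combination (α₁ * β₂ + α₂ * β₁ + α₂ * β₂ * χ s) *
      apply_pow_three_eq_one hχ3 (ne_of_mem_erase hs)
  rw [sum_congr rfl hreduce, sum_add_distrib, sum_add_distrib, ← mul_sum, ← mul_sum,
    hsum 1 one_ne_zero (by rwa [pow_one]), hsum 2 two_ne_zero hχ2, sum_const,
    card_erase_of_mem (mem_univ 0), card_univ, nsmul_eq_mul,
    Nat.cast_sub Fintype.card_pos, Nat.cast_one]
  ring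

end MulChar

section CubeSum

variable [Fintype F]

def cubeSum (ψ : AddChar F ℂ) (t : F) : ℂ :=
  ∑ x, ψ (t * x ^ 3)

variable {ψ : AddChar F ℂ}

lemma cubeSum_zero : cubeSum ψ 0 = Fintype.card F := by
  simp [cubeSum]

variable [DecidableEq F] {χ : MulChar F ℂ}

open MulChar

lemma cubeSum_eq (hχ : χ ≠ 1) (hχ3 : χ ^ 3 = 1) (hψ : ψ.IsPrimitive) {t : F} (ht : t ≠ 0) :
    cubeSum ψ t = χ t ^ 2 * gaussSum χ ψ + χ t * gaussSum (χ ^ 2) ψ := by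
  have hmulShift (η : MulChar F ℂ) : ∑ u, η u * ψ (t * u) = η⁻¹ t * gaussSum η ψ :=
    gaussSum_mulShift_eq η ψ (Units.mk0 t ht)
  calc cubeSum ψ t
      = ∑ u, (#{x : F | x ^ 3 = u} : ℂ) * ψ (t * u) := by
        rw [cubeSum, ← sum_fiberwise' univ (· ^ 3) fun u ↦ ψ (t * u)]
        simp only [sum_const, nsmul_eq_mul]
    _ = ∑ u, (ψ.mulShift t) u + ∑ u, χ u * ψ (t * u) + ∑ u, (χ ^ 2) u * ψ (t * u) := by
        simp only [card_pow_three_eq hχ hχ3, ← sum_add_distrib, AddChar.mulShift_apply,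
          pow_apply' χ two_ne_zero]
        exact sum_congr rfl fun u _ ↦ by ring
    _ = χ t ^ 2 * gaussSum χ ψ + χ t * gaussSum (χ ^ 2) ψ := by
        rw [AddChar.sum_eq_zero_of_ne_one (hψ ht), hmulShift, hmulShift, ← inv_pow,
          inv_eq_sq_of_pow_three_eq_one hχ3, ← pow_mul, pow_apply' χ two_ne_zero,
          pow_apply' χ (by norm_num)]
        linear_combination χ t * gaussSum (χ ^ 2) ψ * apply_pow_three_eq_one hχ3 ht

lemma cubeSum_mul_cubeSum (hχ : χ ≠ 1) (hχ3 : χ ^ 3 = 1) (hψ : ψ.IsPrimitive) {s x y : F}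
    (hs : s ≠ 0) (hx : x ≠ 0) (hy : y ≠ 0) :
    cubeSum ψ (s * x) * cubeSum ψ (s * y) =
      Fintype.card F * (χ x ^ 2 * χ y + χ x * χ y ^ 2) +
        χ x ^ 2 * χ y ^ 2 * gaussSum χ ψ ^ 2 * χ s +
          χ x * χ y * gaussSum (χ ^ 2) ψ ^ 2 * χ s ^ 2 := by
  rw [cubeSum_eq hχ hχ3 hψ (mul_ne_zero hs hx), cubeSum_eq hχ hχ3 hψ (mul_ne_zero hs hy),
    map_mul, map_mul, ← gaussSum_mul_gaussSum_sq hχ hχ3 hψ]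
  linear_combination (χ x ^ 2 * χ y ^ 2 * gaussSum χ ψ ^ 2 * χ s +
    (χ x ^ 2 * χ y + χ x * χ y ^ 2) * gaussSum χ ψ * gaussSum (χ ^ 2) ψ) *
      apply_pow_three_eq_one hχ3 hs

theorem natCard_diagonal_cubic_eq (hχ : χ ≠ 1) (hχ3 : χ ^ 3 = 1) {a b c d : F} (ha : a ≠ 0)
    (hb : b ≠ 0) (hc : c ≠ 0) (hd : d ≠ 0) :
    (Nat.card {v : F × F × F × F //
        a * v.1 ^ 3 + b * v.2.1 ^ 3 + c * v.2.2.1 ^ 3 + d * v.2.2.2 ^ 3 = 0} : ℂ) =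
      (Fintype.card F : ℂ) ^ 3 + Fintype.card F * (Fintype.card F - 1) *
        (χ (a * b / (c * d)) + starRingEnd ℂ (χ (a * b / (c * d))) +
         χ (a * c / (b * d)) + starRingEnd ℂ (χ (a * c / (b * d))) +
         χ (a * d / (b * c)) + starRingEnd ℂ (χ (a * d / (b * c)))) := by
  set q : ℂ := (Fintype.card F : ℂ)
  set ψ := AddChar.FiniteField.primitiveChar_to_Complex F
  have hψ : ψ.IsPrimitive := AddChar.FiniteField.primitiveChar_to_Complex_isPrimitive F
  have hq : q ≠ 0 := Nat.cast_ne_zero.mpr Fintype.card_ne_zero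
  have hcount := natCard_mul_card_eq_sum_sum_addChar hψ
    fun v : F × F × F × F ↦ a * v.1 ^ 3 + b * v.2.1 ^ 3 + c * v.2.2.1 ^ 3 + d * v.2.2.2 ^ 3
  have hdiag (s : F) : ∑ v : F × F × F × F,
      ψ (s * (a * v.1 ^ 3 + b * v.2.1 ^ 3 + c * v.2.2.1 ^ 3 + d * v.2.2.2 ^ 3)) =
        cubeSum ψ (s * a) * cubeSum ψ (s * b) * cubeSum ψ (s * c) * cubeSum ψ (s * d) :=
    sum_addChar_diagonal ψ s a b c d (· ^ 3)
  rw [← add_sum_erase _ _ (mem_univ 0), hdiag, sum_congr rfl fun s hs ↦ by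
    rw [hdiag, mul_assoc, cubeSum_mul_cubeSum hχ hχ3 hψ (ne_of_mem_erase hs) ha hb,
      cubeSum_mul_cubeSum hχ hχ3 hψ (ne_of_mem_erase hs) hc hd],
    sum_erase_zero_trinomial_mul hχ hχ3] at hcount
  simp only [zero_mul, cubeSum_zero] at hcount
  simp only [conj_apply_div]
  simp only [apply_div_of_pow_three_eq_one hχ3, map_mul]
  apply mul_right_cancel₀ hq
  linear_combination hcount + (q - 1) * (χ a ^ 2 * χ b ^ 2 * χ c * χ d +
    χ a * χ b * χ c ^ 2 * χ d ^ 2) * (gaussSum χ ψ * gaussSum (χ ^ 2) ψ + q) *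
      gaussSum_mul_gaussSum_sq hχ hχ3 hψ

end CubeSum

theorem affine_count_character_formula_general (p : ℕ) [Fact p.Prime]
    (χ : MulChar (ZMod p) ℂ) (hχ : χ ≠ 1) (hχ3 : χ ^ 3 = 1)
    (a b c d : ZMod p) (ha : a ≠ 0) (hb : b ≠ 0) (hc : c ≠ 0) (hd : d ≠ 0) :
    (Nat.card {v : ZMod p × ZMod p × ZMod p × ZMod p //
        a * v.1 ^ 3 + b * v.2.1 ^ 3 + c * v.2.2.1 ^ 3 + d * v.2.2.2 ^ 3 = 0} : ℂ) =
      (p : ℂ) ^ 3 + (p : ℂ) * ((p : ℂ) - 1) *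
        (χ (a * b / (c * d)) + (starRingEnd ℂ) (χ (a * b / (c * d))) +
         χ (a * c / (b * d)) + (starRingEnd ℂ) (χ (a * c / (b * d))) +
         χ (a * d / (b * c)) + (starRingEnd ℂ) (χ (a * d / (b * c)))) := by
  simpa only [ZMod.card] using natCard_diagonal_cubic_eq hχ hχ3 ha hb hc hd

theorem affine_count_character_formula (p : ℕ) [Fact p.Prime] (h3 : p % 3 = 1)
    (χ : MulChar (ZMod p) ℂ) (hχ : χ ≠ 1) (hχ3 : χ ^ 3 = 1)
    (a b c d : ZMod p) (ha : a ≠ 0) (hb : b ≠ 0) (hc : c ≠ 0) (hd : d ≠ 0) :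
    (Nat.card {v : ZMod p × ZMod p × ZMod p × ZMod p //
        a * v.1 ^ 3 + b * v.2.1 ^ 3 + c * v.2.2.1 ^ 3 + d * v.2.2.2 ^ 3 = 0} : ℂ) =
      (p : ℂ) ^ 3 + (p : ℂ) * ((p : ℂ) - 1) *
        (χ (a * b / (c * d)) + (starRingEnd ℂ) (χ (a * b / (c * d))) +
         χ (a * c / (b * d)) + (starRingEnd ℂ) (χ (a * c / (b * d))) +
         χ (a * d / (b * c)) + (starRingEnd ℂ) (χ (a * d / (b * c)))) :=
  affine_count_character_formula_general p χ hχ hχ3 a b c d ha hb hc hd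
end
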